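/- arXiv:math/0611622 — 4 statements merged into one kernel-verified Lean document; each statement's English description precedes it below -/
import Mathlib

section
/- Let p, q be positive integers with p > q² and set r = p/q. Then for every ε > 0 there exists a set A ⊆ [0,1) which is a finite union of intervals whose total Lebesgue measure is less than ε, such that the set of positive real numbers λ satisfying ⟨λ rⁿ⟩ ∈ A for all n ∈ ℕ is uncountable. -/
namespace Stmt0


def dg (p q Nn : ℕ) : ℕ := (q - (Nn * p) % q) % q

def bitf (b : ℕ → Bool) : ℕ → Bool := fun i => if i = 0 then true else b (i - 1)

def bp (q G : ℕ) (b : ℕ → Bool) (k : ℕ) : ℕ :=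
  if k % G = 0 ∧ bitf b (k / G) = true then q else 0

def NN (p q G : ℕ) (b : ℕ → Bool) : ℕ → ℕ
  | 0 => 0
  | n + 1 => (NN p q G b n * p + (dg p q (NN p q G b n) + bp q G b n)) / q

def sf (p q G : ℕ) (b : ℕ → Bool) (k : ℕ) : ℕ :=
  dg p q (NN p q G b k) + bp q G b k

lemma dg_lt {q : ℕ} (hq : 0 < q) (p Nn : ℕ) : dg p q Nn < q := Nat.mod_lt _ hq

lemma dvd_dg {q : ℕ} (hq : 0 < q) (p Nn : ℕ) : q ∣ Nn * p + dg p q Nn := by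
  unfold dg
  set a := Nn * p with ha
  by_cases h : a % q = 0
  · simp only [h, Nat.sub_zero, Nat.mod_self]
    simpa using Nat.dvd_of_mod_eq_zero h
  · have h2 : a % q < q := Nat.mod_lt _ hq
    have h3 : (q - a % q) % q = q - a % q := Nat.mod_eq_of_lt (by omega)
    rw [h3]
    refine ⟨a / q + 1, ?_⟩
    have h4 := Nat.div_add_mod a q
    have h5 : q * (a / q + 1) = q * (a / q) + q := by ring
    omega

lemma dvd_sf {q : ℕ} (hq : 0 < q) (p G : ℕ) (b : ℕ → Bool) (n : ℕ) :
    q ∣ NN p q G b n * p + sf p q G b n := by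
  unfold sf
  rw [← Nat.add_assoc]
  refine Nat.dvd_add (dvd_dg hq _ _) ?_
  unfold bp; split <;> simp

lemma NN_succ {q : ℕ} (hq : 0 < q) (p G : ℕ) (b : ℕ → Bool) (n : ℕ) :
    q * NN p q G b (n + 1) = NN p q G b n * p + sf p q G b n := by
  have h := dvd_sf hq p G b n
  unfold sf at h ⊢
  rw [← Nat.add_assoc] at h ⊢
  show q * ((NN p q G b n * p + (dg p q (NN p q G b n) + bp q G b n)) / q) = _
  rw [← Nat.add_assoc]
  exact Nat.mul_div_cancel' h

lemma bp_le (q G : ℕ) (b : ℕ → Bool) (k : ℕ) :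
    bp q G b k ≤ if k % G = 0 then q else 0 := by
  unfold bp; split <;> rename_i h
  · simp [h.1]
  · split <;> simp

lemma sf_le {q : ℕ} (hq : 0 < q) (p G : ℕ) (b : ℕ → Bool) (k : ℕ) :
    sf p q G b k ≤ (q - 1) + if k % G = 0 then q else 0 := by
  have h1 := dg_lt hq p (NN p q G b k)
  have h2 := bp_le q G b k
  unfold sf; split at h2 <;> split <;> omega

lemma sf_le' {q : ℕ} (hq : 0 < q) (p G : ℕ) (b : ℕ → Bool) (k : ℕ) :
    sf p q G b k ≤ 2 * q := by
  have := sf_le hq p G b k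
  split at this <;> omega

lemma sf_zero {q : ℕ} (hq : 0 < q) {G : ℕ} (hG : 0 < G) (p : ℕ) (b : ℕ → Bool) :
    sf p q G b 0 = q := by
  unfold sf dg bp NN bitf
  simp [Nat.zero_mod, Nat.mod_self]

lemma NN_sf_congr (p q G : ℕ) (hG : 0 < G) (b b' : ℕ → Bool) (n : ℕ)
    (hb : ∀ i, i * G < n → bitf b i = bitf b' i) :
    NN p q G b n = NN p q G b' n ∧ ∀ k < n, sf p q G b k = sf p q G b' k := by
  induction n with
  | zero => exact ⟨rfl, by omega⟩
  | succ n ih =>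
    have hb' : ∀ i, i * G < n → bitf b i = bitf b' i := fun i hi => hb i (by omega)
    obtain ⟨hN, hs⟩ := ih hb'
    have hbp : bp q G b n = bp q G b' n := by
      unfold bp
      by_cases h : n % G = 0
      · have hlt : (n / G) * G < n + 1 := by
          have := Nat.div_mul_le_self n G
          omega
        rw [hb (n / G) hlt]
      · simp [h]
    have hsn : sf p q G b n = sf p q G b' n := by
      unfold sf; rw [hN, hbp]
    refine ⟨?_, ?_⟩
    · show (NN p q G b n * p + (dg p q (NN p q G b n) + bp q G b n)) / q = _
      show _ = (NN p q G b' n * p + (dg p q (NN p q G b' n) + bp q G b' n)) / q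
      rw [hN, hbp]
    · intro k hk
      rcases Nat.lt_succ_iff_lt_or_eq.mp hk with h | h
      · exact hs k h
      · subst h; exact hsn

lemma sf_diff (p q G : ℕ) (hG : 0 < G) (b b' : ℕ → Bool) (k0 : ℕ)
    (hb : ∀ i, i < k0 → bitf b i = bitf b' i) (hne : bitf b k0 ≠ bitf b' k0) :
    (sf p q G b (k0 * G) : ℤ) - sf p q G b' (k0 * G) = q ∨
    (sf p q G b' (k0 * G) : ℤ) - sf p q G b (k0 * G) = q := by
  have hcong := NN_sf_congr p q G hG b b' (k0 * G)
      (fun i hi => hb i (by exact Nat.lt_of_mul_lt_mul_right hi))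
  have hN := hcong.1
  have hmod : (k0 * G) % G = 0 := by simp [Nat.mul_mod_left]
  have hdiv : (k0 * G) / G = k0 := Nat.mul_div_cancel _ hG
  unfold sf bp
  rw [hN, hmod, hdiv]
  cases h : bitf b k0 <;> cases h' : bitf b' k0 <;> simp [h, h'] at hne ⊢


lemma bp_eq_zero {q G : ℕ} (b : ℕ → Bool) {k : ℕ} (h : k % G ≠ 0) : bp q G b k = 0 := by
  unfold bp
  rw [if_neg]
  rintro ⟨h1, -⟩
  exact h h1

lemma sf_lt_q {q G : ℕ} (hq : 0 < q) (p : ℕ) (b : ℕ → Bool) {k : ℕ} (h : k % G ≠ 0) :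
    sf p q G b k < q := by
  unfold sf
  rw [bp_eq_zero b h]
  simpa using dg_lt hq p _

lemma sum_geom_le {x : ℝ} (h0 : 0 ≤ x) (h1 : x < 1) (n : ℕ) :
    ∑ i ∈ Finset.range n, x ^ i ≤ (1 - x)⁻¹ := by
  rw [← tsum_geometric_of_lt_one h0 h1]
  exact Summable.sum_le_tsum _ (fun i _ => pow_nonneg h0 i) (summable_geometric_of_lt_one h0 h1)

lemma sum_mod_eq (G M t : ℕ) (hG : 0 < G) (ht : t < G) (f : ℕ → ℝ) :
    ∑ j ∈ Finset.range (G * M), (if j % G = t then f j else 0)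
      = ∑ i ∈ Finset.range M, f (t + i * G) := by
  induction M with
  | zero => simp
  | succ M ih =>
    have h1 : G * (M + 1) = G * M + G := by ring
    rw [h1, Finset.sum_range_add, ih, Finset.sum_range_succ]
    congr 1
    have h2 : ∀ w ∈ Finset.range G,
        (if (G * M + w) % G = t then f (G * M + w) else 0)
          = (if w = t then f (G * M + w) else 0) := by
      intro w hw
      simp only [Finset.mem_range] at hw
      have : (G * M + w) % G = w := by
        rw [Nat.add_comm, Nat.mul_comm, Nat.add_mul_mod_self_right]
        exact Nat.mod_eq_of_lt hw
      rw [this]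
    rw [Finset.sum_congr rfl h2, Finset.sum_ite_eq' (Finset.range G)]
    simp only [Finset.mem_range, ht, if_true]
    rw [Nat.add_comm, Nat.mul_comm]

lemma summable_mod (G t : ℕ) {x : ℝ} (h0 : 0 ≤ x) (h1 : x < 1) :
    Summable (fun j : ℕ => if j % G = t then x ^ (j + 1) else 0) := by
  refine Summable.of_nonneg_of_le (fun j => by positivity) (fun j => ?_)
    ((summable_geometric_of_lt_one h0 h1).mul_left x)
  split
  · rw [pow_succ, mul_comm]
  · positivity

lemma tsum_mod_le (G t : ℕ) (hG : 0 < G) (ht : t < G) {x : ℝ} (h0 : 0 ≤ x) (h1 : x < 1) :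
    ∑' j : ℕ, (if j % G = t then x ^ (j + 1) else 0) ≤ x ^ (t + 1) * (1 - x ^ G)⁻¹ := by
  refine Real.tsum_le_of_sum_range_le (fun j => by positivity) (fun n => ?_)
  calc ∑ j ∈ Finset.range n, (if j % G = t then x ^ (j + 1) else 0)
      ≤ ∑ j ∈ Finset.range (G * n), (if j % G = t then x ^ (j + 1) else 0) := by
        refine Finset.sum_le_sum_of_subset_of_nonneg ?_ (fun j _ _ => by positivity)
        exact Finset.range_subset_range.mpr (Nat.le_mul_of_pos_left n hG)
    _ = ∑ i ∈ Finset.range n, x ^ (t + i * G + 1) := sum_mod_eq G n t hG ht _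
    _ ≤ x ^ (t + 1) * (1 - x ^ G)⁻¹ := by
        have h2 : ∀ i ∈ Finset.range n, x ^ (t + i * G + 1) = x ^ (t + 1) * (x ^ G) ^ i := by
          intro i _
          rw [← pow_mul, ← pow_add]
          ring_nf
        rw [Finset.sum_congr rfl h2, ← Finset.mul_sum]
        refine mul_le_mul_of_nonneg_left ?_ (by positivity)
        exact sum_geom_le (by positivity) (pow_lt_one₀ h0 h1 (by omega)) n



noncomputable def th (p q : ℕ) : ℝ := q / p

noncomputable def lam (p q G : ℕ) (b : ℕ → Bool) : ℝ :=
  ∑' k : ℕ, (sf p q G b k : ℝ) * th p q ^ (k + 1) / q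

noncomputable def sig (p q G : ℕ) (b : ℕ → Bool) (n : ℕ) : ℝ :=
  ∑' j : ℕ, (sf p q G b (n + j) : ℝ) * th p q ^ (j + 1) / q

section facts
variable {p q : ℕ}

lemma th_nonneg : 0 ≤ th p q := by unfold th; positivity

lemma th_pos (hp : 0 < p) (hq : 0 < q) : 0 < th p q := by
  unfold th
  have : (0:ℝ) < p := by exact_mod_cast hp
  have : (0:ℝ) < q := by exact_mod_cast hq
  positivity

lemma two_q_le (hq : 0 < q) (hpq : q ^ 2 < p) : 2 * q ≤ p := by nlinarith [sq_nonneg (q - 1)]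

lemma th_le_half (hq : 0 < q) (hpq : q ^ 2 < p) : th p q ≤ 1 / 2 := by
  have h := two_q_le hq hpq
  have hp : 0 < p := by nlinarith
  have hp' : (0:ℝ) < p := by exact_mod_cast hp
  have h' : (2:ℝ) * q ≤ p := by exact_mod_cast h
  rw [th, div_le_div_iff₀ hp' (by norm_num)]
  linarith

lemma th_lt_one (hq : 0 < q) (hpq : q ^ 2 < p) : th p q < 1 :=
  lt_of_le_of_lt (th_le_half hq hpq) (by norm_num)

end facts

section con
variable {p q G : ℕ} (hp : 0 < p) (hq : 0 < q) (hpq : q ^ 2 < p)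

include hp hq hpq

lemma term_le (b : ℕ → Bool) (n j : ℕ) :
    (sf p q G b (n + j) : ℝ) * th p q ^ (j + 1) / q ≤ (2 * th p q) * th p q ^ j := by
  have h1 : (sf p q G b (n + j) : ℝ) ≤ 2 * q := by exact_mod_cast sf_le' hq p G b (n + j)
  have hq' : (0:ℝ) < q := by exact_mod_cast hq
  have h2 : (0:ℝ) ≤ th p q := th_nonneg
  rw [div_le_iff₀ hq', pow_succ]
  calc (sf p q G b (n + j) : ℝ) * (th p q ^ j * th p q)
      ≤ (2 * q) * (th p q ^ j * th p q) := by
        exact mul_le_mul_of_nonneg_right h1 (by positivity)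
    _ = 2 * th p q * th p q ^ j * q := by ring

lemma term_nonneg (b : ℕ → Bool) (n j : ℕ) :
    0 ≤ (sf p q G b (n + j) : ℝ) * th p q ^ (j + 1) / q := by
  have h2 : (0:ℝ) ≤ th p q := th_nonneg
  positivity

lemma summable_sig (b : ℕ → Bool) (n : ℕ) :
    Summable (fun j : ℕ => (sf p q G b (n + j) : ℝ) * th p q ^ (j + 1) / q) := by
  refine Summable.of_nonneg_of_le (term_nonneg hp hq hpq b n) (term_le hp hq hpq b n) ?_
  exact (summable_geometric_of_lt_one th_nonneg (th_lt_one hq hpq)).mul_left _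

lemma summable_lam (b : ℕ → Bool) :
    Summable (fun k : ℕ => (sf p q G b k : ℝ) * th p q ^ (k + 1) / q) := by
  have := summable_sig hp hq hpq (G := G) b 0
  simpa using this

lemma sig_nonneg (b : ℕ → Bool) (n : ℕ) : 0 ≤ sig p q G b n :=
  tsum_nonneg (term_nonneg hp hq hpq b n)

lemma tsum_geom_succ : ∑' j : ℕ, th p q ^ (j + 1) = th p q * (1 - th p q)⁻¹ := by
  have h0 : (0:ℝ) ≤ th p q := th_nonneg
  have h1 : th p q < 1 := th_lt_one hq hpq
  calc ∑' j : ℕ, th p q ^ (j + 1) = ∑' j : ℕ, th p q * th p q ^ j := by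
        refine tsum_congr fun j => ?_; rw [pow_succ]; ring
    _ = th p q * (1 - th p q)⁻¹ := by
        rw [tsum_mul_left, tsum_geometric_of_lt_one h0 h1]

lemma sig_le_two (hG : 0 < G) (b : ℕ → Bool) (n : ℕ) : sig p q G b n ≤ 2 := by
  have h0 : (0:ℝ) ≤ th p q := th_nonneg
  have h1 : th p q < 1 := th_lt_one hq hpq
  have hhalf := th_le_half hq hpq
  have hsum : Summable (fun j : ℕ => (2 * th p q) * th p q ^ j) :=
    (summable_geometric_of_lt_one h0 h1).mul_left _
  have := Summable.tsum_le_tsum (term_le hp hq hpq (G := G) b n) (summable_sig hp hq hpq b n) hsum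
  refine le_trans this ?_
  rw [tsum_mul_left, tsum_geometric_of_lt_one h0 h1]
  have h2 : (0:ℝ) < 1 - th p q := by linarith
  have h3 : th p q * (1 - th p q)⁻¹ ≤ 1 := by
    rw [← div_eq_mul_inv, div_le_one h2]
    linarith
  nlinarith [th_pos hp hq (q := q)]

lemma head_eq (b : ℕ → Bool) (n : ℕ) :
    ∑ k ∈ Finset.range n, (sf p q G b k : ℝ) * th p q ^ (k + 1) / q
      = (NN p q G b n : ℝ) * th p q ^ n := by
  have hq' : (0:ℝ) < q := by exact_mod_cast hq
  have hp' : (0:ℝ) < p := by exact_mod_cast hp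
  induction n with
  | zero => simp [NN]
  | succ n ih =>
    rw [Finset.sum_range_succ, ih]
    have hN := NN_succ hq p G b n
    have hNr : (q:ℝ) * NN p q G b (n + 1) = NN p q G b n * p + sf p q G b n := by
      exact_mod_cast hN
    have hNN1 : (NN p q G b (n + 1) : ℝ) = ((NN p q G b n : ℝ) * p + sf p q G b n) / q := by
      rw [eq_div_iff (ne_of_gt hq')]
      linarith [hNr]
    rw [hNN1]
    show _ + _ = _
    simp only [th]
    field_simp
    ring_nf; simp [ne_of_gt hp']


lemma ineq1 : ((q:ℝ) - 1) / q * (th p q * (1 - th p q)⁻¹) ≤ 1 / 3 := by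
  have hq' : (0:ℝ) < q := by exact_mod_cast hq
  have hp' : (0:ℝ) < p := by exact_mod_cast hp
  have hhalf := th_le_half hq hpq
  have h2 : (0:ℝ) < 1 - th p q := by linarith [th_le_half hq hpq]
  have hp4 : (q:ℝ) * 4 ≤ p + 3 := by
    have : (q:ℤ) * 4 ≤ p + 3 := by
      have h := hpq
      zify at h
      nlinarith [sq_nonneg ((q:ℤ) - 2)]
    exact_mod_cast this
  have hth : th p q * (1 - th p q)⁻¹ = q / (p - q) := by
    have hpq' : (0:ℝ) < p - q := by
      have : th p q < 1 := th_lt_one hq hpq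
      simp only [th] at this
      rw [div_lt_one hp'] at this
      linarith
    rw [← div_eq_mul_inv, th, one_sub_div (ne_of_gt hp'), div_div_div_cancel_right₀]
    exact ne_of_gt hp'
  rw [hth, div_mul_div_comm]
  have hpq' : (0:ℝ) < p - q := by
    have : th p q < 1 := th_lt_one hq hpq
    simp only [th] at this
    rw [div_lt_one hp'] at this
    linarith
  rw [div_le_div_iff₀ (by positivity) (by norm_num)]
  nlinarith

lemma powG_le (hG3 : 3 ≤ G) : th p q ^ G ≤ 1 / 8 := by
  have h0 : (0:ℝ) ≤ th p q := th_nonneg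
  have hhalf := th_le_half hq hpq
  calc th p q ^ G ≤ (1/2:ℝ) ^ G := pow_le_pow_left₀ h0 hhalf G
    _ ≤ (1/2:ℝ) ^ 3 := pow_le_pow_of_le_one (by norm_num) (by norm_num) hG3
    _ ≤ 1/8 := by norm_num

lemma ineq2 (hG3 : 3 ≤ G) : th p q ^ G * (1 - th p q ^ G)⁻¹ ≤ 1 / 7 := by
  have h8 := powG_le hp hq hpq (G := G) hG3
  have h0 : (0:ℝ) ≤ th p q ^ G := pow_nonneg th_nonneg G
  have h2 : (7/8:ℝ) ≤ 1 - th p q ^ G := by linarith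
  have h3 : (1 - th p q ^ G)⁻¹ ≤ 8/7 := by
    rw [inv_le_comm₀ (by linarith) (by norm_num)]
    linarith
  calc th p q ^ G * (1 - th p q ^ G)⁻¹ ≤ (1/8) * (8/7) := by
        apply mul_le_mul h8 h3 (by positivity) (by norm_num)
    _ = 1/7 := by norm_num

lemma lam_lt (hG3 : 3 ≤ G) (b b' : ℕ → Bool) (n : ℕ) (hnG : n % G = 0)
    (hagree : ∀ k < n, sf p q G b k = sf p q G b' k)
    (hd : (sf p q G b' n : ℝ) + q ≤ (sf p q G b n : ℝ)) :
    lam p q G b' < lam p q G b := by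
  have hG : 0 < G := by omega
  have hq' : (0:ℝ) < q := by exact_mod_cast hq
  have h0 : (0:ℝ) ≤ th p q := th_nonneg
  have h1 : th p q < 1 := th_lt_one hq hpq
  set θ := th p q with hθ
  have hsb := summable_lam hp hq hpq (G := G) b
  have hsb' := summable_lam hp hq hpq (G := G) b'
  set D : ℕ → ℝ := fun k => ((sf p q G b k : ℝ) - sf p q G b' k) * θ ^ (k + 1) / q with hD
  have hsD : Summable D := by
    have := hsb.sub hsb'
    refine this.congr fun k => ?_
    simp only [hD]; ring
  have hdiff : lam p q G b - lam p q G b' = ∑' k, D k := by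
    rw [lam, lam, ← Summable.tsum_sub hsb hsb']
    refine tsum_congr fun k => ?_
    simp only [hD]; ring
  -- split at n+1
  have hsplit := Summable.sum_add_tsum_nat_add (f := D) (n + 1) hsD
  -- head
  have hhead : ∑ k ∈ Finset.range (n + 1), D k = D n := by
    rw [Finset.sum_range_succ]
    have : ∑ k ∈ Finset.range n, D k = 0 := by
      refine Finset.sum_eq_zero fun k hk => ?_
      simp only [Finset.mem_range] at hk
      simp [hD, hagree k hk]
    rw [this, zero_add]
  have hDn : θ ^ (n + 1) ≤ D n := by
    simp only [hD]
    rw [le_div_iff₀ hq']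
    have h3 : (q:ℝ) ≤ (sf p q G b n : ℝ) - sf p q G b' n := by linarith
    calc θ ^ (n+1) * q = (q:ℝ) * θ ^ (n+1) := by ring
      _ ≤ ((sf p q G b n : ℝ) - sf p q G b' n) * θ ^ (n+1) :=
          mul_le_mul_of_nonneg_right h3 (by positivity)
  -- tail bound
  set g : ℕ → ℝ := fun i => ((q:ℝ)-1)/q * θ ^ (i + n + 2)
      + (if i % G = G - 1 then θ ^ (i + n + 2) else 0) with hg
  have hsg : Summable g := by
    apply Summable.add
    · refine Summable.mul_left _ ?_
      have : Summable (fun i : ℕ => θ ^ i) := summable_geometric_of_lt_one h0 h1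
      exact (this.mul_left (θ ^ (n+2))).congr fun i => by rw [← pow_add]; ring_nf
    · refine Summable.of_nonneg_of_le (fun i => by positivity) (fun i => ?_)
           ((summable_geometric_of_lt_one h0 h1).mul_left (θ ^ (n+2)))
      split
      · rw [← pow_add]; ring_nf; exact le_refl _
      · positivity
  have habs : ∀ i : ℕ, |D (i + (n + 1))| ≤ g i := by
    intro i
    have hb1 := sf_le hq p G b (i + (n+1))
    have hb2 := sf_le hq p G b' (i + (n+1))
    have hmod : (i + (n + 1)) % G = (i + 1) % G := by
      have h2 : i + (n + 1) = (i + 1) + n := by omega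
      rw [h2, Nat.add_mod, hnG, Nat.add_zero, Nat.mod_mod_of_dvd _ dvd_rfl]
    have hiff : ((i + 1) % G = 0) ↔ (i % G = G - 1) := by
      have hlt : i % G < G := Nat.mod_lt _ hG
      have key : (i + 1) % G = (i % G + 1) % G := by
        rw [Nat.add_mod, Nat.mod_eq_of_lt (show 1 < G by omega)]
      rw [key]
      constructor
      · intro h
        by_cases hc : i % G + 1 < G
        · rw [Nat.mod_eq_of_lt hc] at h; omega
        · omega
      · intro h
        rw [h, Nat.sub_add_cancel (by omega), Nat.mod_self]
    set k := i + (n + 1) with hk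
    have hexp : k + 1 = i + n + 2 := by omega
    have hbnd : ∀ bb : ℕ → Bool,
        (sf p q G bb k : ℝ) ≤ ((q:ℝ) - 1) + (if i % G = G - 1 then (q:ℝ) else 0) := by
      intro bb
      have h := sf_le hq p G bb k
      rw [hmod] at h
      by_cases hc : i % G = G - 1
      · rw [if_pos (hiff.mpr hc)] at h
        rw [if_pos hc]
        have : (sf p q G bb k : ℝ) ≤ ((q - 1 + q : ℕ) : ℝ) := by exact_mod_cast h
        push_cast [Nat.cast_sub (show 1 ≤ q by omega)] at this
        linarith
      · rw [if_neg (fun hcc => hc (hiff.mp hcc))] at h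
        rw [if_neg hc]
        have : (sf p q G bb k : ℝ) ≤ ((q - 1 + 0 : ℕ) : ℝ) := by exact_mod_cast h
        push_cast [Nat.cast_sub (show 1 ≤ q by omega)] at this
        linarith
    have hnn : ∀ bb : ℕ → Bool, (0:ℝ) ≤ (sf p q G bb k : ℝ) := fun bb => Nat.cast_nonneg _
    have habs0 : |(sf p q G b k : ℝ) - sf p q G b' k|
        ≤ ((q:ℝ) - 1) + (if i % G = G - 1 then (q:ℝ) else 0) := by
      rw [abs_sub_le_iff]
      constructor
      · linarith [hbnd b, hnn b']
      · linarith [hbnd b', hnn b]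
    have hDabs : |D k| = |(sf p q G b k : ℝ) - sf p q G b' k| * θ ^ (k + 1) / q := by
      rw [hD]
      rw [abs_div, abs_mul, abs_of_nonneg (pow_nonneg h0 _), abs_of_pos hq']
    rw [show D (i + (n+1)) = D k from rfl, hDabs, hexp, hg]
    rw [div_le_iff₀ hq']
    by_cases hc : i % G = G - 1 <;> simp only [hc, if_true, if_false]
    · rw [if_pos hc] at habs0
      have hθe : (0:ℝ) ≤ θ ^ (i + n + 2) := by positivity
      have := mul_le_mul_of_nonneg_right habs0 hθe
      calc |(sf p q G b k : ℝ) - sf p q G b' k| * θ ^ (i+n+2)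
          ≤ (((q:ℝ) - 1) + q) * θ ^ (i+n+2) := this
        _ = (((q:ℝ)-1)/q * θ ^ (i+n+2) + θ ^ (i+n+2)) * q := by field_simp
    · rw [if_neg hc] at habs0
      have hθe : (0:ℝ) ≤ θ ^ (i + n + 2) := by positivity
      have := mul_le_mul_of_nonneg_right habs0 hθe
      calc |(sf p q G b k : ℝ) - sf p q G b' k| * θ ^ (i+n+2)
          ≤ (((q:ℝ) - 1) + 0) * θ ^ (i+n+2) := this
        _ = (((q:ℝ)-1)/q * θ ^ (i+n+2) + 0) * q := by field_simp; ring
  -- summability of |D∘shift|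
  have hsabs : Summable (fun i => |D (i + (n + 1))|) := by
    refine Summable.of_nonneg_of_le (fun i => abs_nonneg _) habs hsg
  have htail1 : |∑' i, D (i + (n + 1))| ≤ ∑' i, g i := by
    calc |∑' i, D (i + (n + 1))| ≤ ∑' i, |D (i + (n + 1))| := by
          simpa using norm_tsum_le_tsum_norm (f := fun i => D (i + (n+1))) (by simpa using hsabs)
      _ ≤ ∑' i, g i := Summable.tsum_le_tsum habs hsabs hsg
  -- compute / bound ∑' g
  have hs1 : Summable (fun i : ℕ => ((q:ℝ)-1)/q * θ ^ (i + n + 2)) := by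
    refine Summable.mul_left _ ?_
    exact ((summable_geometric_of_lt_one h0 h1).mul_left (θ ^ (n+2))).congr
      fun i => by rw [← pow_add]; ring_nf
  have hs2 : Summable (fun i : ℕ => if i % G = G - 1 then θ ^ (i + n + 2) else 0) := by
    refine Summable.of_nonneg_of_le (fun i => by positivity) (fun i => ?_)
      ((summable_geometric_of_lt_one h0 h1).mul_left (θ ^ (n+2)))
    split
    · rw [← pow_add]; ring_nf; exact le_refl _
    · positivity
  have hgsum : ∑' i, g i ≤ θ ^ (n + 1) * (1/3 + 1/7) := by
    rw [hg, Summable.tsum_add hs1 hs2]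
    have e1 : ∑' i : ℕ, ((q:ℝ)-1)/q * θ ^ (i + n + 2)
        = ((q:ℝ)-1)/q * (θ ^ (n+1) * (θ * (1-θ)⁻¹)) := by
      rw [tsum_mul_left]
      congr 1
      rw [← tsum_geom_succ hp hq hpq, ← tsum_mul_left]
      exact tsum_congr fun i => by rw [← pow_add]; ring_nf
    have e2 : ∑' i : ℕ, (if i % G = G - 1 then θ ^ (i + n + 2) else 0)
        ≤ θ ^ (n+1) * (θ ^ G * (1 - θ ^ G)⁻¹) := by
      have hre : ∀ i : ℕ, (if i % G = G - 1 then θ ^ (i + n + 2) else 0)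
          = θ ^ (n+1) * (if i % G = G - 1 then θ ^ (i + 1) else 0) := by
        intro i
        split
        · rw [← pow_add]; ring_nf
        · ring
      calc ∑' i : ℕ, (if i % G = G - 1 then θ ^ (i + n + 2) else 0)
          = θ ^ (n+1) * ∑' i : ℕ, (if i % G = G - 1 then θ ^ (i + 1) else 0) := by
            rw [← tsum_mul_left]; exact tsum_congr hre
        _ ≤ θ ^ (n+1) * (θ ^ ((G-1) + 1) * (1 - θ ^ G)⁻¹) := by
            refine mul_le_mul_of_nonneg_left ?_ (by positivity)
            exact tsum_mod_le G (G-1) hG (by omega) h0 h1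
        _ = θ ^ (n+1) * (θ ^ G * (1 - θ ^ G)⁻¹) := by
            rw [Nat.sub_add_cancel (by omega)]
    have i1 := ineq1 hp hq hpq
    have i2 := ineq2 hp hq hpq hG3
    have hθn1 : (0:ℝ) ≤ θ ^ (n+1) := by positivity
    rw [e1]
    have b1 : ((q:ℝ)-1)/q * (θ ^ (n+1) * (θ * (1-θ)⁻¹)) ≤ θ ^ (n+1) * (1/3) := by
      have : ((q:ℝ)-1)/q * (θ ^ (n+1) * (θ * (1-θ)⁻¹))
          = θ ^ (n+1) * (((q:ℝ)-1)/q * (θ * (1-θ)⁻¹)) := by ring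
      rw [this]
      exact mul_le_mul_of_nonneg_left i1 hθn1
    have b2 : θ ^ (n+1) * (θ ^ G * (1 - θ ^ G)⁻¹) ≤ θ ^ (n+1) * (1/7) :=
      mul_le_mul_of_nonneg_left i2 hθn1
    nlinarith [e2]
  -- conclude
  have hfin : lam p q G b - lam p q G b' ≥ θ ^ (n+1) * (1 - (1/3 + 1/7)) := by
    have h4 : lam p q G b - lam p q G b' = D n + ∑' i, D (i + (n + 1)) := by
      rw [hdiff, ← hsplit, hhead]
    have h5 : ∑' i, D (i + (n + 1)) ≥ -(θ ^ (n+1) * (1/3 + 1/7)) := by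
      have := neg_abs_le (∑' i, D (i + (n + 1)))
      linarith [le_trans htail1 hgsum]
    rw [h4]
    have := hDn
    nlinarith
  have hθpos : (0:ℝ) < θ := th_pos hp hq
  nlinarith [pow_pos hθpos (n+1)]


lemma lam_eq (b : ℕ → Bool) (n : ℕ) :
    lam p q G b * ((p:ℝ)/q) ^ n = (NN p q G b n : ℝ) + sig p q G b n := by
  have hq' : (0:ℝ) < q := by exact_mod_cast hq
  have hp' : (0:ℝ) < p := by exact_mod_cast hp
  have hθr : th p q * ((p:ℝ)/q) = 1 := by rw [th]; field_simp
  have hsum := summable_lam hp hq hpq (G := G) b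
  rw [lam, ← Summable.sum_add_tsum_nat_add n hsum, add_mul, head_eq hp hq hpq]
  congr 1
  · rw [mul_assoc, ← mul_pow, hθr, one_pow, mul_one]
  · rw [sig, ← tsum_mul_right]
    refine tsum_congr fun i => ?_
    rw [Nat.add_comm i n]
    have e : th p q ^ (n + i + 1) * ((p:ℝ)/q) ^ n = th p q ^ (i + 1) := by
      rw [show n + i + 1 = (i + 1) + n by omega, pow_add, mul_assoc, ← mul_pow, hθr,
        one_pow, mul_one]
    rw [div_mul_eq_mul_div, mul_assoc, e]

lemma lam_pos (hG : 0 < G) (b : ℕ → Bool) : 0 < lam p q G b := by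
  have hq' : (0:ℝ) < q := by exact_mod_cast hq
  have hθ : 0 < th p q := th_pos hp hq
  have hle := Summable.le_tsum (summable_lam hp hq hpq (G := G) b) 0
    (fun j _ => by
      have := term_nonneg hp hq hpq (G := G) b 0 j
      simpa using this)
  rw [← lam] at hle
  have h0 : (sf p q G b 0 : ℝ) * th p q ^ (0 + 1) / q = th p q := by
    rw [sf_zero hq hG]
    field_simp
    simp
  rw [h0] at hle
  linarith

lemma sig_split (b : ℕ → Bool) (n N : ℕ) :
    sig p q G b n = (∑ j ∈ Finset.range N, (sf p q G b (n + j) : ℝ) * th p q ^ (j + 1) / q)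
      + th p q ^ N * sig p q G b (n + N) := by
  have hsum := summable_sig hp hq hpq (G := G) b n
  rw [sig, ← Summable.sum_add_tsum_nat_add N hsum]
  congr 1
  rw [sig, ← tsum_mul_left]
  refine tsum_congr fun i => ?_
  have e1 : n + (i + N) = (n + N) + i := by omega
  rw [e1, show i + N + 1 = N + (i + 1) by omega, pow_add]
  ring

end con

lemma mod_compl (G n : ℕ) (hG : 0 < G) (j : ℕ) :
    ((n + j) % G = 0) ↔ (j % G = (G - n % G) % G) := by
  have hu : n % G < G := Nat.mod_lt _ hG
  have hv : j % G < G := Nat.mod_lt _ hG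
  rw [Nat.add_mod]
  by_cases h : n % G = 0
  · rw [h]
    simpa [Nat.mod_eq_of_lt hv] using Iff.rfl
  · have ht : (G - n % G) % G = G - n % G := Nat.mod_eq_of_lt (by omega)
    rw [ht]
    by_cases h2 : n % G + j % G < G
    · rw [Nat.mod_eq_of_lt h2]; omega
    · have h3 : n % G + j % G - G < G := by omega
      rw [Nat.mod_eq_sub_mod (by omega), Nat.mod_eq_of_lt h3]
      omega


noncomputable def Pfun (p q G N M : ℕ) (t : Fin G) (d : Fin N → Fin q) (v : Fin M → Fin 2) : ℝ :=
  (∑ j : Fin N, (d j : ℝ) * th p q ^ ((j : ℕ) + 1) / q)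
  + ∑ i : Fin M, (v i : ℝ) * th p q ^ ((t : ℕ) + (i : ℕ) * G + 1)

section cov
variable {p q G : ℕ} (hp : 0 < p) (hq : 0 < q) (hpq : q ^ 2 < p)
include hp hq hpq

lemma Pfun_nonneg (N M : ℕ) (t : Fin G) (d : Fin N → Fin q) (v : Fin M → Fin 2) :
    0 ≤ Pfun p q G N M t d v := by
  have h0 : (0:ℝ) ≤ th p q := th_nonneg
  have hq' : (0:ℝ) < q := by exact_mod_cast hq
  refine add_nonneg (Finset.sum_nonneg fun j _ => by positivity)
    (Finset.sum_nonneg fun i _ => by positivity)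

lemma Pfun_lt_one (hG3 : 3 ≤ G) (M : ℕ) (hM : 2 ≤ M) (t : Fin G) (d : Fin (G * M) → Fin q)
    (v : Fin M → Fin 2) :
    Pfun p q G (G * M) M t d v + 2 * th p q ^ (G * M) < 1 := by
  have h0 : (0:ℝ) ≤ th p q := th_nonneg
  have h1 : th p q < 1 := th_lt_one hq hpq
  have hhalf := th_le_half hq hpq
  have hq' : (0:ℝ) < q := by exact_mod_cast hq
  have hq1 : (1:ℝ) ≤ q := by exact_mod_cast hq
  rw [Pfun]
  set θ := th p q with hθ
  -- base sum bound
  have hbase : (∑ j : Fin (G * M), (d j : ℝ) * θ ^ ((j : ℕ) + 1) / q) ≤ 1/3 := by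
    have hterm : ∀ j : Fin (G * M), (d j : ℝ) * θ ^ ((j : ℕ) + 1) / q
        ≤ ((q:ℝ) - 1) / q * θ ^ ((j : ℕ) + 1) := by
      intro j
      have hd : (d j : ℝ) ≤ (q:ℝ) - 1 := by
        have := (d j).isLt
        have : ((d j : ℕ) : ℝ) ≤ ((q - 1 : ℕ) : ℝ) := by exact_mod_cast Nat.le_sub_one_of_lt this
        push_cast [Nat.cast_sub (show 1 ≤ q by omega)] at this
        linarith
      calc (d j : ℝ) * θ ^ ((j:ℕ) + 1) / q ≤ ((q:ℝ) - 1) * θ ^ ((j:ℕ) + 1) / q := by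
            gcongr
        _ = ((q:ℝ) - 1) / q * θ ^ ((j:ℕ) + 1) := by ring
    calc (∑ j : Fin (G * M), (d j : ℝ) * θ ^ ((j:ℕ) + 1) / q)
        ≤ ∑ j : Fin (G * M), ((q:ℝ) - 1) / q * θ ^ ((j:ℕ) + 1) := Finset.sum_le_sum fun j _ => hterm j
      _ = ((q:ℝ)-1)/q * ∑ j ∈ Finset.range (G * M), θ ^ (j + 1) := by
          rw [Finset.mul_sum, ← Fin.sum_univ_eq_sum_range (fun j => ((q:ℝ)-1)/q * θ ^ (j+1)) (G * M)]
      _ ≤ ((q:ℝ)-1)/q * (θ * (1 - θ)⁻¹) := by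
          refine mul_le_mul_of_nonneg_left ?_ (div_nonneg (by linarith) (le_of_lt hq'))
          have : ∀ j ∈ Finset.range (G * M), θ ^ (j + 1) = θ * θ ^ j := by
            intro j _; rw [pow_succ]; ring
          rw [Finset.sum_congr rfl this, ← Finset.mul_sum]
          exact mul_le_mul_of_nonneg_left (sum_geom_le h0 h1 (G * M)) h0
      _ ≤ 1/3 := ineq1 hp hq hpq
  -- bump sum bound
  have hbump : (∑ i : Fin M, (v i : ℝ) * θ ^ ((t:ℕ) + (i:ℕ) * G + 1)) ≤ 4/7 := by
    have hterm : ∀ i : Fin M, (v i : ℝ) * θ ^ ((t:ℕ) + (i:ℕ) * G + 1)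
        ≤ θ * (θ ^ G) ^ (i : ℕ) := by
      intro i
      have hv : (v i : ℝ) ≤ 1 := by
        have := (v i).isLt
        have h2 : (v i : ℕ) ≤ 1 := by omega
        exact_mod_cast h2
      have hmono : θ ^ ((t:ℕ) + (i:ℕ) * G + 1) ≤ θ ^ ((i:ℕ) * G + 1) :=
        pow_le_pow_of_le_one h0 (le_of_lt h1) (by omega)
      have he : θ ^ ((i:ℕ) * G + 1) = θ * (θ ^ G) ^ (i:ℕ) := by
        rw [← pow_mul, ← pow_succ']
        congr 1
        ring
      calc (v i : ℝ) * θ ^ ((t:ℕ) + (i:ℕ) * G + 1) ≤ 1 * θ ^ ((t:ℕ) + (i:ℕ) * G + 1) := by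
            refine mul_le_mul_of_nonneg_right hv (by positivity)
        _ = θ ^ ((t:ℕ) + (i:ℕ) * G + 1) := by ring
        _ ≤ θ ^ ((i:ℕ) * G + 1) := hmono
        _ = θ * (θ ^ G) ^ (i:ℕ) := he
    have hgeom : (∑ i : Fin M, (θ ^ G) ^ (i : ℕ)) ≤ (1 - θ ^ G)⁻¹ := by
      rw [Fin.sum_univ_eq_sum_range (fun i => (θ ^ G) ^ i) M]
      exact sum_geom_le (by positivity) (pow_lt_one₀ h0 h1 (by omega)) M
    have h8 : (1 - θ ^ G)⁻¹ ≤ 8/7 := by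
      have := powG_le hp hq hpq (G := G) hG3
      rw [inv_le_comm₀ (by linarith) (by norm_num)]
      linarith
    calc (∑ i : Fin M, (v i : ℝ) * θ ^ ((t:ℕ) + (i:ℕ) * G + 1))
        ≤ ∑ i : Fin M, θ * (θ ^ G) ^ (i : ℕ) := Finset.sum_le_sum fun i _ => hterm i
      _ = θ * ∑ i : Fin M, (θ ^ G) ^ (i : ℕ) := by rw [Finset.mul_sum]
      _ ≤ (1/2) * (8/7) := by
          refine mul_le_mul hhalf (le_trans hgeom h8) ?_ (by norm_num)
          exact Finset.sum_nonneg fun i _ => by positivity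
      _ = 4/7 := by norm_num
  -- tail bound
  have htail : 2 * θ ^ (G * M) ≤ 1/32 := by
    have h6 : 6 ≤ (G * M) := by
      have : 3 * 2 ≤ G * M := Nat.mul_le_mul hG3 hM
      omega
    calc 2 * θ ^ (G * M) ≤ 2 * (1/2:ℝ) ^ (G * M) := by
          refine mul_le_mul_of_nonneg_left (pow_le_pow_left₀ h0 hhalf (G * M)) (by norm_num)
      _ ≤ 2 * (1/2:ℝ) ^ 6 := by
          refine mul_le_mul_of_nonneg_left
            (pow_le_pow_of_le_one (by norm_num) (by norm_num) h6) (by norm_num)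
      _ ≤ 1/32 := by norm_num
  linarith


lemma sig_mem (hG3 : 3 ≤ G) (M : ℕ) (b : ℕ → Bool) (n : ℕ) :
    ∃ (t : Fin G) (d : Fin (G * M) → Fin q) (v : Fin M → Fin 2),
      Pfun p q G (G * M) M t d v ≤ sig p q G b n ∧
      sig p q G b n ≤ Pfun p q G (G * M) M t d v + 2 * th p q ^ (G * M) := by
  have hG : 0 < G := by omega
  have hq' : (0:ℝ) < q := by exact_mod_cast hq
  have h0 : (0:ℝ) ≤ th p q := th_nonneg
  set t0 := (G - n % G) % G with ht0def
  have ht0 : t0 < G := Nat.mod_lt _ hG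
  have he2q : ∀ j : ℕ, sf p q G b (n + j) < 2 * q := by
    intro j
    have h := sf_le hq p G b (n + j)
    split at h <;> omega
  let dfun : Fin (G * M) → Fin q := fun j => ⟨sf p q G b (n + (j:ℕ)) % q, Nat.mod_lt _ hq⟩
  let vfun : Fin M → Fin 2 := fun i => ⟨sf p q G b (n + (t0 + (i:ℕ) * G)) / q,
    (Nat.div_lt_iff_lt_mul hq).mpr (by have := he2q (t0 + (i:ℕ) * G); omega)⟩
  have hkey : ∑ j ∈ Finset.range (G * M), (sf p q G b (n + j) : ℝ) * th p q ^ (j + 1) / q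
      = Pfun p q G (G * M) M ⟨t0, ht0⟩ dfun vfun := by
    rw [Pfun]
    have step1 : ∀ j ∈ Finset.range (G * M),
        (sf p q G b (n + j) : ℝ) * th p q ^ (j + 1) / q
        = ((sf p q G b (n + j) % q : ℕ) : ℝ) * th p q ^ (j + 1) / q
          + ((sf p q G b (n + j) / q : ℕ) : ℝ) * th p q ^ (j + 1) := by
      intro j _
      have hmd : (sf p q G b (n + j) % q : ℕ) + q * (sf p q G b (n + j) / q)
          = sf p q G b (n + j) := Nat.mod_add_div _ _
      have hc : (sf p q G b (n + j) : ℝ)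
          = ((sf p q G b (n + j) % q : ℕ) : ℝ) + q * ((sf p q G b (n + j) / q : ℕ) : ℝ) := by
        exact_mod_cast hmd.symm
      rw [hc]
      field_simp
    rw [Finset.sum_congr rfl step1, Finset.sum_add_distrib]
    congr 1
    · rw [← Fin.sum_univ_eq_sum_range
        (fun j => ((sf p q G b (n + j) % q : ℕ) : ℝ) * th p q ^ (j + 1) / q) (G * M)]
    · have step2 : ∀ j ∈ Finset.range (G * M),
          ((sf p q G b (n + j) / q : ℕ) : ℝ) * th p q ^ (j + 1)
          = if j % G = t0 then ((sf p q G b (n + j) / q : ℕ) : ℝ) * th p q ^ (j + 1) else 0 := by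
        intro j _
        split
        · rfl
        · rename_i hne
          have hmod0 : (n + j) % G ≠ 0 := fun hc => hne ((mod_compl G n hG j).mp hc)
          rw [Nat.div_eq_of_lt (sf_lt_q hq p b hmod0)]
          simp
      rw [Finset.sum_congr rfl step2,
        sum_mod_eq G M t0 hG ht0 (fun j => ((sf p q G b (n + j) / q : ℕ) : ℝ) * th p q ^ (j + 1))]
      rw [← Fin.sum_univ_eq_sum_range
        (fun i => ((sf p q G b (n + (t0 + i * G)) / q : ℕ) : ℝ) * th p q ^ (t0 + i * G + 1)) M]
  have hsplit := sig_split hp hq hpq (G := G) b n (G * M)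
  have htail0 : 0 ≤ th p q ^ (G * M) * sig p q G b (n + G * M) :=
    mul_nonneg (pow_nonneg h0 _) (sig_nonneg hp hq hpq b _)
  have htail2 : th p q ^ (G * M) * sig p q G b (n + G * M) ≤ 2 * th p q ^ (G * M) := by
    have hs2 := sig_le_two hp hq hpq hG b (n + G * M)
    nlinarith [pow_nonneg h0 (G * M)]
  refine ⟨⟨t0, ht0⟩, dfun, vfun, ?_, ?_⟩
  · rw [hsplit, hkey]; linarith
  · rw [hsplit, hkey]; linarith

end cov

section inj
variable {p q G : ℕ} (hp : 0 < p) (hq : 0 < q) (hpq : q ^ 2 < p)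
include hp hq hpq

lemma lam_injective (hG3 : 3 ≤ G) : Function.Injective (lam p q G) := by
  have hG : 0 < G := by omega
  intro b b' hbb
  by_contra hne
  obtain ⟨i0, hd, hmin⟩ := Nat.findX (Function.ne_iff.mp hne)
  have hagree_bits : ∀ i, i < i0 + 1 → bitf b i = bitf b' i := by
    intro i hi
    rcases i with _ | i'
    · rfl
    · have : b i' = b' i' := not_not.mp (fun hcc => (hmin i' (by omega)) hcc)
      simp [bitf, this]
  have hdiffbit : bitf b (i0 + 1) ≠ bitf b' (i0 + 1) := by
    simpa [bitf] using hd
  set n := (i0 + 1) * G with hn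
  have hnG : n % G = 0 := Nat.mul_mod_left _ _
  have hagree : ∀ k < n, sf p q G b k = sf p q G b' k :=
    (NN_sf_congr p q G hG b b' n
      (fun i hi => hagree_bits i (by exact Nat.lt_of_mul_lt_mul_right hi))).2
  have hagree' : ∀ k < n, sf p q G b' k = sf p q G b k := fun k hk => (hagree k hk).symm
  rcases sf_diff p q G hG b b' (i0 + 1) hagree_bits hdiffbit with h | h
  all_goals rw [show (i0 + 1) * G = n from rfl] at h
  · have hd' : (sf p q G b' n : ℝ) + q ≤ (sf p q G b n : ℝ) := by
      have h2 : (sf p q G b' n : ℤ) + q ≤ (sf p q G b n : ℤ) := by omega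
      exact_mod_cast h2
    exact absurd hbb (lam_lt hp hq hpq hG3 b b' n hnG hagree hd').ne'
  · have hd' : (sf p q G b n : ℝ) + q ≤ (sf p q G b' n : ℝ) := by
      have h2 : (sf p q G b n : ℤ) + q ≤ (sf p q G b' n : ℤ) := by omega
      exact_mod_cast h2
    exact absurd hbb (lam_lt hp hq hpq hG3 b' b n hnG hagree' hd').ne

end inj

theorem not_countable_nat_bool : ¬ Countable (ℕ → Bool) := by
  intro h
  obtain ⟨f, hf⟩ := Countable.exists_injective_nat (ℕ → Bool)
  have hs : Function.Surjective (Function.invFun f) := Function.invFun_surjective hf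
  obtain ⟨m, hm⟩ := hs (fun n => !(Function.invFun f n n))
  have := congrFun hm m
  simp at this

end Stmt0

open Stmt0 in
/-- For positive integers `p, q` with `p > q²` and `r = p/q`, for every
`ε > 0` there is a set `A ⊆ [0,1)` which is a finite union of intervals of total
length `< ε`, such that the set of `λ > 0` with `Int.fract (λ * rⁿ) ∈ A` for all
`n : ℕ` is uncountable. -/
theorem stmt_0 (p q : ℕ) (hp : 0 < p) (hq : 0 < q) (hpq : q ^ 2 < p)
    (r : ℝ) (hr : r = (p : ℝ) / (q : ℝ)) :
    ∀ ε : ℝ, 0 < ε →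
      ∃ A : Set ℝ, A ⊆ Set.Ico (0 : ℝ) 1 ∧
        (∃ (m : ℕ) (a b : Fin m → ℝ), (∀ i, a i ≤ b i) ∧
          A = ⋃ i, Set.Icc (a i) (b i) ∧ ∑ i, (b i - a i) < ε) ∧
        ¬ Set.Countable {lam : ℝ | 0 < lam ∧ ∀ n : ℕ, Int.fract (lam * r ^ n) ∈ A} := by
  intro ε hε
  have hq' : (0:ℝ) < q := by exact_mod_cast hq
  have hp' : (0:ℝ) < p := by exact_mod_cast hp
  have h0 : (0:ℝ) ≤ th p q := th_nonneg
  -- ρ = q²/p < 1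
  set ρ : ℝ := (q : ℝ) * th p q with hρdef
  have hρ0 : 0 ≤ ρ := mul_nonneg (le_of_lt hq') h0
  have hρ1 : ρ < 1 := by
    rw [hρdef, th, mul_div_assoc']
    rw [div_lt_one hp']
    have : (q:ℝ)^2 < p := by exact_mod_cast hpq
    nlinarith
  -- choose G
  obtain ⟨G1, hG1⟩ := exists_pow_lt_of_lt_one (show (0:ℝ) < 1/2 by norm_num) hρ1
  set G := G1 + 3 with hGdef
  have hG3 : 3 ≤ G := by omega
  have hG : 0 < G := by omega
  have hρG : ρ ^ G < 1/2 :=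
    lt_of_le_of_lt (pow_le_pow_of_le_one hρ0 (le_of_lt hρ1) (by omega)) hG1
  set c : ℝ := 2 * ρ ^ G with hcdef
  have hc0 : 0 ≤ c := by positivity
  have hc1 : c < 1 := by rw [hcdef]; linarith
  have hG' : (0:ℝ) < G := by exact_mod_cast hG
  -- choose M
  obtain ⟨M1, hM1⟩ := exists_pow_lt_of_lt_one (show (0:ℝ) < ε / (2 * G) by positivity) hc1
  set M := M1 + 2 with hMdef
  have hM2 : 2 ≤ M := by omega
  have hcM : c ^ M < ε / (2 * G) :=
    lt_of_le_of_lt (pow_le_pow_of_le_one hc0 (le_of_lt hc1) (by omega)) hM1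
  set L : ℝ := 2 * th p q ^ (G * M) with hLdef
  have hL0 : 0 ≤ L := by positivity
  -- index type
  set m : ℕ := G * (q ^ (G * M) * 2 ^ M) with hmdef
  have hcard : Fintype.card (Fin G × (Fin (G * M) → Fin q) × (Fin M → Fin 2)) = m := by
    simp [Fintype.card_prod, Fintype.card_fun, hmdef]
  have eqv : (Fin G × (Fin (G * M) → Fin q) × (Fin M → Fin 2)) ≃ Fin m :=
    Fintype.equivFinOfCardEq hcard
  set a : Fin m → ℝ := fun i =>
    Pfun p q G (G * M) M (eqv.symm i).1 (eqv.symm i).2.1 (eqv.symm i).2.2 with hadef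
  refine ⟨⋃ i : Fin m, Set.Icc (a i) (a i + L), ?_, ⟨m, a, fun i => a i + L,
    fun i => le_add_of_nonneg_right hL0, rfl, ?_⟩, ?_⟩
  · -- A ⊆ Ico 0 1
    refine Set.iUnion_subset fun i => fun x hx => ?_
    have h1 := Pfun_nonneg hp hq hpq (G * M) M (eqv.symm i).1 (eqv.symm i).2.1 (eqv.symm i).2.2
    have h2 := Pfun_lt_one hp hq hpq hG3 M hM2 (eqv.symm i).1 (eqv.symm i).2.1 (eqv.symm i).2.2
    exact ⟨le_trans h1 hx.1, lt_of_le_of_lt hx.2 h2⟩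
  · -- measure
    have hsum : ∑ i : Fin m, (a i + L - a i) = (m : ℝ) * L := by
      have : ∀ i : Fin m, a i + L - a i = L := fun i => by ring
      rw [Finset.sum_congr rfl (fun i _ => this i), Finset.sum_const, Finset.card_univ,
        Fintype.card_fin, nsmul_eq_mul]
    rw [hsum]
    have hmr : (m : ℝ) = (G : ℝ) * ((q:ℝ) ^ (G * M) * 2 ^ M) := by
      rw [hmdef]; push_cast; ring
    have hqθ : (q:ℝ) ^ (G * M) * th p q ^ (G * M) = (ρ ^ G) ^ M := by
      rw [← mul_pow, ← hρdef, ← pow_mul]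
    have hml : (m : ℝ) * L = 2 * G * c ^ M := by
      rw [hmr, hLdef, hcdef, mul_pow]
      calc (G : ℝ) * ((q:ℝ) ^ (G * M) * 2 ^ M) * (2 * th p q ^ (G * M))
          = 2 * G * (2 ^ M * ((q:ℝ) ^ (G * M) * th p q ^ (G * M))) := by ring
        _ = 2 * G * (2 ^ M * (ρ ^ G) ^ M) := by rw [hqθ]
    rw [hml]
    calc 2 * (G:ℝ) * c ^ M < 2 * G * (ε / (2 * G)) := by
          refine mul_lt_mul_of_pos_left hcM (by positivity)
      _ = ε := by field_simp
  · -- uncountability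
    intro hcount
    have hmem : ∀ b : ℕ → Bool, lam p q G b ∈
        {lam : ℝ | 0 < lam ∧ ∀ n : ℕ, Int.fract (lam * r ^ n) ∈
          ⋃ i : Fin m, Set.Icc (a i) (a i + L)} := by
      intro b
      refine ⟨lam_pos hp hq hpq hG b, fun n => ?_⟩
      obtain ⟨t, d, v, hlo, hhi⟩ := sig_mem hp hq hpq hG3 M b n
      have hup := Pfun_lt_one hp hq hpq hG3 M hM2 t d v
      have hfr : Int.fract (lam p q G b * r ^ n) = sig p q G b n := by
        rw [hr, lam_eq hp hq hpq b n, Int.fract_natCast_add, Int.fract_eq_self]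
        exact ⟨sig_nonneg hp hq hpq b n, by
          have := Pfun_nonneg hp hq hpq (G*M) M t d v
          linarith⟩
      rw [hfr]
      refine Set.mem_iUnion.mpr ⟨eqv ⟨t, d, v⟩, ?_⟩
      have ha : a (eqv ⟨t, d, v⟩) = Pfun p q G (G * M) M t d v := by
        rw [hadef]
        simp [Equiv.symm_apply_apply]
      rw [ha]
      exact ⟨hlo, hhi⟩
    have hinj : Function.Injective
        (fun b : ℕ → Bool => (⟨lam p q G b, hmem b⟩ :
          {lam : ℝ | 0 < lam ∧ ∀ n : ℕ, Int.fract (lam * r ^ n) ∈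
            ⋃ i : Fin m, Set.Icc (a i) (a i + L)})) := by
      intro b b' h
      exact lam_injective hp hq hpq hG3 (congrArg Subtype.val h)
    have := hcount.to_subtype
    exact not_countable_nat_bool (hinj.countable)
end

section
/- For every real number r > 1, the set E_r := {λ > 0 : ‖λ rⁿ‖ ≤ 1/(r−1) for all n ∈ ℕ} is uncountable. -/
/-!
For `r ≤ 3` the bound `1 / (r - 1) ≥ 1 / 2` holds for every real number, so `E_r` is the whole
half-line. For `r > 3`, every integer sequence with `|aₙ₊₁ - r aₙ| ≤ 1` is shadowed by a geometric
orbit: `λ = lim aₙ / rⁿ` satisfies `|λ rⁿ - aₙ| ≤ 1 / (r - 1) < 1 / 2`, so `aₙ = round (λ rⁿ)`.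
Choosing `aₙ₊₁ ∈ {⌊r aₙ⌋, ⌊r aₙ⌋ + 1}` freely at every step yields continuum many such `λ`.
-/

noncomputable section

/-- The set `E_r` of the statement. -/
def nearIntegerSet (r : ℝ) : Set ℝ :=
  {lam : ℝ | 0 < lam ∧ ∀ n : ℕ, |lam * r ^ n - round (lam * r ^ n)| ≤ 1 / (r - 1)}

def floorBranchSeq (r : ℝ) (s : ℕ → Bool) : ℕ → ℤ
  | 0 => 1
  | n + 1 => ⌊(floorBranchSeq r s n : ℝ) * r⌋ + (s n).toNat

end

instance : Uncountable (ℕ → Bool) := by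
  rw [← not_countable_iff, ← Cardinal.mk_le_aleph0_iff, not_le]
  simpa [Cardinal.mk_arrow] using Cardinal.cantor Cardinal.aleph0

theorem not_countable_Ioi_real (a : ℝ) : ¬ (Set.Ioi a).Countable := by
  rw [← Cardinal.le_aleph0_iff_set_countable, Cardinal.mk_Ioi_real, not_le]
  exact Cardinal.aleph0_lt_continuum

theorem round_eq_of_abs_sub_lt_half {α : Type*} [Field α] [LinearOrder α] [IsStrictOrderedRing α]
    [FloorRing α] {x : α} {z : ℤ} (h : |x - z| < 1 / 2) : round x = z := by
  rw [round_eq_iff]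
  constructor <;> linarith [abs_lt.mp h]

theorem exists_abs_mul_pow_sub_le {r : ℝ} (hr : 1 < r) {a : ℕ → ℝ}
    (ha : ∀ n, |a (n + 1) - a n * r| ≤ 1) :
    ∃ lam : ℝ, ∀ n, |lam * r ^ n - a n| ≤ 1 / (r - 1) := by
  have hr0 : 0 < r := by linarith
  have hq : r⁻¹ < 1 := inv_lt_one_of_one_lt₀ hr
  set f : ℕ → ℝ := fun n => a n / r ^ n
  have hstep : ∀ n, dist (f n) (f (n + 1)) ≤ r⁻¹ * r⁻¹ ^ n := by
    intro n
    have hdiff : f n - f (n + 1) = (a n * r - a (n + 1)) / r ^ (n + 1) := by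
      simp only [f]
      field_simp
      ring
    rw [Real.dist_eq, hdiff, abs_div, abs_of_pos (pow_pos hr0 _), abs_sub_comm, ← pow_succ',
      inv_pow, div_eq_mul_inv]
    exact mul_le_of_le_one_left (by positivity) (ha n)
  obtain ⟨lam, hlim⟩ := cauchySeq_tendsto_of_complete (cauchySeq_of_le_geometric _ _ hq hstep)
  refine ⟨lam, fun n => ?_⟩
  have hn := dist_le_of_le_geometric_of_tendsto _ _ hq hstep hlim n
  rw [Real.dist_eq, abs_sub_comm] at hn
  have hrn : 0 < r ^ n := pow_pos hr0 n
  calc |lam * r ^ n - a n| = |lam - f n| * r ^ n := by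
        rw [← abs_of_pos hrn, ← abs_mul, abs_of_pos hrn]
        simp only [f]
        field_simp
    _ ≤ r⁻¹ * r⁻¹ ^ n / (1 - r⁻¹) * r ^ n := by gcongr
    _ = 1 / (r - 1) := by
        have : r - 1 ≠ 0 := by linarith
        rw [inv_pow]
        field_simp

section floorBranchSeq

variable (r : ℝ)

theorem abs_floorBranchSeq_succ_sub_le (s : ℕ → Bool) (n : ℕ) :
    |(floorBranchSeq r s (n + 1) : ℝ) - floorBranchSeq r s n * r| ≤ 1 := by
  have h₁ := Int.floor_le ((floorBranchSeq r s n : ℝ) * r)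
  have h₂ := Int.lt_floor_add_one ((floorBranchSeq r s n : ℝ) * r)
  have hbit : ((s n).toNat : ℝ) ≤ 1 := by exact_mod_cast Bool.toNat_le (s n)
  rw [floorBranchSeq, abs_le]
  push_cast
  constructor <;> linarith [((s n).toNat).cast_nonneg (α := ℝ)]

theorem floorBranchSeq_injective : Function.Injective (floorBranchSeq r) := by
  intro s t hst
  funext n
  have h := congr_fun hst (n + 1)
  simp only [floorBranchSeq, congr_fun hst n, add_right_inj, Nat.cast_inj] at h
  cases hs : s n <;> cases ht : t n <;> simp_all

end floorBranchSeq

theorem Ioi_subset_nearIntegerSet {r : ℝ} (h1 : 1 < r) (h3 : r ≤ 3) :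
    Set.Ioi 0 ⊆ nearIntegerSet r := by
  intro lam hlam
  have hhalf : (1 : ℝ) / 2 ≤ 1 / (r - 1) := by
    rw [div_le_div_iff₀ (by norm_num) (by linarith)]
    linarith
  exact ⟨hlam, fun n => (abs_sub_round _).trans hhalf⟩

theorem exists_injective_forall_mem_nearIntegerSet {r : ℝ} (h3 : 3 < r) :
    ∃ f : (ℕ → Bool) → ℝ, Function.Injective f ∧ ∀ s, f s ∈ nearIntegerSet r := by
  choose lam hlam using fun s =>
    exists_abs_mul_pow_sub_le (a := fun n => (floorBranchSeq r s n : ℝ)) (by linarith)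
      (abs_floorBranchSeq_succ_sub_le r s)
  have hhalf : 1 / (r - 1) < 1 / 2 := by
    rw [div_lt_div_iff₀ (by linarith) (by norm_num)]
    linarith
  have hround : ∀ s n, round (lam s * r ^ n) = floorBranchSeq r s n := fun s n =>
    round_eq_of_abs_sub_lt_half ((hlam s n).trans_lt hhalf)
  refine ⟨lam, fun s t hst => floorBranchSeq_injective r ?_, fun s => ⟨?_, fun n => ?_⟩⟩
  · funext n
    rw [← hround, ← hround, hst]
  · have h0 := abs_lt.mp ((hlam s 0).trans_lt hhalf)
    simp only [pow_zero, mul_one, floorBranchSeq, Int.cast_one] at h0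
    linarith
  · exact (round_le _ _).trans (hlam s n)

/-- For every real `r > 1`, the set
`E_r = {λ > 0 : ‖λ rⁿ‖ ≤ 1/(r−1) for all n}` is uncountable, where `‖x‖` is the
distance from `x` to the nearest integer. -/
theorem stmt_4 (r : ℝ) (hr : 1 < r) :
    ¬ Set.Countable
      {lam : ℝ | 0 < lam ∧
        ∀ n : ℕ, |lam * r ^ n - round (lam * r ^ n)| ≤ 1 / (r - 1)} := by
  change ¬ (nearIntegerSet r).Countable
  intro hc
  rcases le_or_gt r 3 with h3 | h3
  · exact not_countable_Ioi_real 0 (hc.mono (Ioi_subset_nearIntegerSet hr h3))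
  · obtain ⟨f, hf, hfE⟩ := exists_injective_forall_mem_nearIntegerSet h3
    have := hc.to_subtype
    exact not_countable (hf.codRestrict hfE).countable
end

section
/- Let ℚ₁ := {p/q : p, q positive integers with p > q²} ⊆ ℝ. Then the cardinality of ℚ₁ ∩ [1, n] is asymptotically equivalent to n³/π² as n → ∞; that is, the ratio #(ℚ₁ ∩ [1, n]) / (n³/π²) tends to 1 as n → ∞. -/
open Filter Real

/-- The set `ℚ₁` of real numbers of the form `p/q` with `p, q` positive integers
and `p > q²`. -/
def Q1 : Set ℝ := {x : ℝ | ∃ p q : ℕ, 0 < p ∧ 0 < q ∧ q ^ 2 < p ∧ x = (p : ℝ) / (q : ℝ)}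

namespace Stmt7
open Finset ArithmeticFunction
open scoped Topology
open scoped ArithmeticFunction.Moebius ArithmeticFunction.zeta

def Gn (n d : ℕ) : ℕ := ∑ b ∈ Finset.Icc 1 (n*n), (n*b - d*b^2)



open Finset ArithmeticFunction

def T (n : ℕ) : Finset ((_ : ℕ) × ℕ) :=
  (Finset.Ico 1 n).sigma fun b => (Finset.Ioc (b^2) (n*b)).filter fun a => Nat.Coprime a b

lemma mem_T {n : ℕ} {p : (_ : ℕ) × ℕ} :
    p ∈ T n ↔ (1 ≤ p.1 ∧ p.1 < n) ∧ (p.1^2 < p.2 ∧ p.2 ≤ n * p.1) ∧ Nat.Coprime p.2 p.1 := by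
  cases p with
  | mk b a => simp [T, Finset.mem_sigma, Finset.mem_filter, Finset.mem_Ico, Finset.mem_Ioc,
      and_assoc]

lemma set_eq (n : ℕ) :
    Q1 ∩ Set.Icc (1:ℝ) (n:ℝ) = (fun p : (_ : ℕ) × ℕ => (p.2 : ℝ)/(p.1 : ℝ)) '' (T n) := by
  ext x
  constructor
  · rintro ⟨⟨p, q, hp, hq, hlt, rfl⟩, hx1, hxn⟩
    set g := Nat.gcd p q with hg
    have hg0 : 0 < g := Nat.gcd_pos_of_pos_left _ hp
    set a := p / g with ha
    set b := q / g with hb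
    have hpa : p = g * a := (Nat.mul_div_cancel' (Nat.gcd_dvd_left p q)).symm
    have hqb : q = g * b := (Nat.mul_div_cancel' (Nat.gcd_dvd_right p q)).symm
    have hb0 : 0 < b := Nat.div_pos (Nat.le_of_dvd hq (Nat.gcd_dvd_right p q)) hg0
    have ha0 : 0 < a := Nat.div_pos (Nat.le_of_dvd hp (Nat.gcd_dvd_left p q)) hg0
    have hcop : Nat.Coprime a b := Nat.coprime_div_gcd_div_gcd hg0
    have hbR : (0:ℝ) < (b:ℝ) := by exact_mod_cast hb0
    have hqR : (0:ℝ) < (q:ℝ) := by exact_mod_cast hq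
    have hxval : (p:ℝ)/(q:ℝ) = (a:ℝ)/(b:ℝ) := by
      rw [hpa, hqb]
      push_cast
      rw [mul_div_mul_left]
      positivity
    -- q < x
    have hqx : (q:ℝ) < (p:ℝ)/(q:ℝ) := by
      rw [lt_div_iff₀ hqR]
      exact_mod_cast by nlinarith [hlt]
    have hbq : b ≤ q := Nat.div_le_self _ _
    have hbx : (b:ℝ) < (a:ℝ)/(b:ℝ) := by
      calc (b:ℝ) ≤ (q:ℝ) := by exact_mod_cast hbq
        _ < (p:ℝ)/(q:ℝ) := hqx
        _ = (a:ℝ)/(b:ℝ) := hxval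
    have hb2a : b^2 < a := by
      have : (b:ℝ)*(b:ℝ) < a := (lt_div_iff₀ hbR).mp hbx
      have : (b:ℝ)^2 < a := by nlinarith
      exact_mod_cast this
    have hanb : a ≤ n * b := by
      have : (a:ℝ)/(b:ℝ) ≤ (n:ℝ) := hxval ▸ hxn
      have : (a:ℝ) ≤ (n:ℝ) * b := (div_le_iff₀ hbR).mp this
      exact_mod_cast this
    have hbn : b < n := by
      by_contra h
      push_neg at h
      have : n * b ≤ b * b := Nat.mul_le_mul h le_rfl
      nlinarith [hb2a, hanb]
    refine ⟨⟨b, a⟩, mem_T.mpr ⟨⟨hb0, hbn⟩, ⟨hb2a, hanb⟩, hcop⟩, hxval.symm⟩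
  · rintro ⟨⟨b, a⟩, hmem, rfl⟩
    obtain ⟨⟨hb1, hbn⟩, ⟨hb2a, hanb⟩, hcop⟩ := mem_T.mp hmem
    have hb0 : (0:ℝ) < (b:ℝ) := by exact_mod_cast hb1
    have hba : b < a := lt_of_le_of_lt (Nat.le_self_pow two_ne_zero b) hb2a
    have ha0 : 0 < a := lt_of_le_of_lt (Nat.zero_le _) hba
    refine ⟨⟨a, b, ha0, hb1, hb2a, rfl⟩, ?_, ?_⟩
    · rw [le_div_iff₀ hb0, one_mul]
      exact_mod_cast hba.le
    · rw [div_le_iff₀ hb0]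
      exact_mod_cast hanb

lemma injOn (n : ℕ) :
    Set.InjOn (fun p : (_ : ℕ) × ℕ => (p.2 : ℝ)/(p.1 : ℝ)) (T n) := by
  rintro ⟨b, a⟩ h1 ⟨b', a'⟩ h2 heq
  obtain ⟨⟨hb1, _⟩, ⟨hb2a, _⟩, hcop⟩ := mem_T.mp h1
  obtain ⟨⟨hb1', _⟩, ⟨hb2a', _⟩, hcop'⟩ := mem_T.mp h2
  have hb0 : (0:ℝ) < (b:ℝ) := by exact_mod_cast hb1
  have hb0' : (0:ℝ) < (b':ℝ) := by exact_mod_cast hb1'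
  have hcross : a * b' = a' * b := by
    have := (div_eq_div_iff hb0.ne' hb0'.ne').mp heq
    exact_mod_cast this
  have hd1 : a ∣ a' := hcop.dvd_of_dvd_mul_right ⟨b', hcross.symm ▸ rfl⟩
  have hd2 : a' ∣ a := hcop'.dvd_of_dvd_mul_right ⟨b, hcross ▸ rfl⟩
  have haa : a = a' := Nat.dvd_antisymm hd1 hd2
  have ha0 : 0 < a := lt_of_le_of_lt (Nat.zero_le _) (lt_of_le_of_lt (Nat.le_self_pow two_ne_zero b) hb2a)
  have hbb : b = b' := by
    subst haa
    exact (Nat.eq_of_mul_eq_mul_left ha0 hcross).symm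
  subst haa; subst hbb; rfl

lemma card_eq (n : ℕ) : Nat.card (Q1 ∩ Set.Icc (1:ℝ) (n:ℝ) : Set ℝ) = (T n).card := by
  rw [Nat.card_coe_set_eq, set_eq, Set.ncard_image_of_injOn (injOn n), Set.ncard_coe_finset]





lemma L1 (d k m : ℕ) (hd : 0 < d) :
    ((Finset.Ioc k m).filter (fun a => d ∣ a)).card = m / d - k / d := by
  rcases le_or_gt k m with hkm | hkm
  · have h1 : (Finset.Ioc 0 m).filter (fun a => d ∣ a) \ (Finset.Ioc 0 k).filter (fun a => d ∣ a)
        = (Finset.Ioc k m).filter (fun a => d ∣ a) := by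
      ext a
      simp only [Finset.mem_sdiff, Finset.mem_filter, Finset.mem_Ioc]
      constructor
      · rintro ⟨⟨⟨_, ham⟩, hda⟩, h2⟩
        refine ⟨⟨?_, ham⟩, hda⟩
        by_contra h
        push_neg at h
        exact h2 ⟨⟨by
          rcases Nat.eq_zero_or_pos a with rfl | ha0
          · exact absurd (Nat.eq_zero_of_dvd_of_lt hda (by omega)) (by omega)
          · exact ha0, h⟩, hda⟩
      · rintro ⟨⟨hka, ham⟩, hda⟩
        exact ⟨⟨⟨by omega, ham⟩, hda⟩, fun ⟨⟨_, hak⟩, _⟩ => by omega⟩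
    have hsub : (Finset.Ioc 0 k).filter (fun a => d ∣ a) ⊆ (Finset.Ioc 0 m).filter (fun a => d ∣ a) :=
      Finset.filter_subset_filter _ (Finset.Ioc_subset_Ioc le_rfl hkm)
    rw [← h1, Finset.card_sdiff_of_subset hsub, Nat.Ioc_filter_dvd_card_eq_div, Nat.Ioc_filter_dvd_card_eq_div]
  · rw [Finset.Ioc_eq_empty (by omega), Finset.filter_empty, Finset.card_empty]
    have : m / d ≤ k / d := Nat.div_le_div_right hkm.le
    omega

lemma moebius_sum (N : ℕ) : ∑ d ∈ N.divisors, μ d = if N = 1 then 1 else 0 := by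
  calc ∑ d ∈ N.divisors, μ d = (μ * ↑ζ) N := coe_mul_zeta_apply.symm
    _ = (1 : ArithmeticFunction ℤ) N := by rw [moebius_mul_coe_zeta]
    _ = if N = 1 then 1 else 0 := one_apply

lemma divisors_gcd (a b : ℕ) (hb : b ≠ 0) :
    (Nat.gcd a b).divisors = b.divisors.filter (· ∣ a) := by
  ext d
  simp only [Nat.mem_divisors, Finset.mem_filter, Nat.dvd_gcd_iff]
  constructor
  · rintro ⟨⟨hda, hdb⟩, _⟩
    exact ⟨⟨hdb, hb⟩, hda⟩
  · rintro ⟨⟨hdb, _⟩, hda⟩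
    exact ⟨⟨hda, hdb⟩, Nat.gcd_ne_zero_right hb⟩

lemma stepA (n b : ℕ) (hb : 0 < b) :
    ((((Finset.Ioc (b^2) (n*b)).filter (fun a => Nat.Coprime a b)).card : ℤ))
      = ∑ d ∈ b.divisors, μ d * ((n*b/d - b^2/d : ℕ) : ℤ) := by
  rw [← Finset.sum_boole]
  have h1 : ∀ a ∈ Finset.Ioc (b^2) (n*b),
      (if Nat.Coprime a b then (1:ℤ) else 0) = ∑ d ∈ b.divisors.filter (· ∣ a), μ d := by
    intro a _
    rw [← divisors_gcd a b hb.ne', moebius_sum]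
  rw [Finset.sum_congr rfl h1]
  have h2 : ∀ a ∈ Finset.Ioc (b^2) (n*b),
      ∑ d ∈ b.divisors.filter (· ∣ a), (μ d : ℤ) = ∑ d ∈ b.divisors, if d ∣ a then (μ d : ℤ) else 0 := by
    intro a _
    rw [Finset.sum_filter]
  rw [Finset.sum_congr rfl h2, Finset.sum_comm]
  refine Finset.sum_congr rfl fun d hd => ?_
  have hd0 : 0 < d := Nat.pos_of_mem_divisors hd
  rw [← Finset.sum_filter, Finset.sum_const, nsmul_eq_mul, L1 _ _ _ hd0, mul_comm]

lemma divisors_eq {b M : ℕ} (hb : 1 ≤ b) (hbM : b ≤ M) :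
    b.divisors = (Finset.Icc 1 M).filter (· ∣ b) := by
  ext d
  simp only [Nat.mem_divisors, Finset.mem_filter, Finset.mem_Icc]
  constructor
  · rintro ⟨hdb, hb0⟩
    exact ⟨⟨Nat.pos_of_dvd_of_pos hdb hb, le_trans (Nat.le_of_dvd hb hdb) hbM⟩, hdb⟩
  · rintro ⟨_, hdb⟩
    exact ⟨hdb, by omega⟩

lemma stepB (n : ℕ) (hn : 1 ≤ n) :
    (∑ b ∈ Finset.Ico 1 n,
      (((Finset.Ioc (b^2) (n*b)).filter (fun a => Nat.Coprime a b)).card : ℤ))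
      = ∑ d ∈ Finset.Icc 1 (n*n), μ d * (Gn n d : ℤ) := by
  have hM : n ≤ n * n := Nat.le_mul_of_pos_left n hn
  have e1 : (∑ b ∈ Finset.Ico 1 n,
      (((Finset.Ioc (b^2) (n*b)).filter (fun a => Nat.Coprime a b)).card : ℤ))
      = ∑ b ∈ Finset.Ico 1 n, ∑ d ∈ b.divisors, μ d * ((n*b/d - b^2/d : ℕ) : ℤ) :=
    Finset.sum_congr rfl fun b hb => stepA n b (Finset.mem_Ico.mp hb).1
  rw [e1]
  -- extend the b-range to Icc 1 (n*n)
  have e2 : ∑ b ∈ Finset.Ico 1 n, ∑ d ∈ b.divisors, μ d * ((n*b/d - b^2/d : ℕ) : ℤ)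
      = ∑ b ∈ Finset.Icc 1 (n*n), ∑ d ∈ b.divisors, μ d * ((n*b/d - b^2/d : ℕ) : ℤ) := by
    apply Finset.sum_subset
    · intro b hb
      rw [Finset.mem_Ico] at hb
      rw [Finset.mem_Icc]
      omega
    · intro b hb hnb
      rw [Finset.mem_Icc] at hb
      rw [Finset.mem_Ico] at hnb
      have hbn : n ≤ b := by omega
      apply Finset.sum_eq_zero
      intro d _
      have : n * b ≤ b ^ 2 := by nlinarith
      have : n*b/d ≤ b^2/d := Nat.div_le_div_right this
      simp [Nat.sub_eq_zero_of_le this]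
  rw [e2]
  have e3 : ∑ b ∈ Finset.Icc 1 (n*n), ∑ d ∈ b.divisors, μ d * ((n*b/d - b^2/d : ℕ) : ℤ)
      = ∑ b ∈ Finset.Icc 1 (n*n), ∑ d ∈ Finset.Icc 1 (n*n),
          if d ∣ b then μ d * ((n*b/d - b^2/d : ℕ) : ℤ) else 0 := by
    refine Finset.sum_congr rfl fun b hb => ?_
    rw [Finset.mem_Icc] at hb
    rw [divisors_eq hb.1 hb.2, Finset.sum_filter]
  rw [e3, Finset.sum_comm]
  refine Finset.sum_congr rfl fun d hd => ?_
  rw [Finset.mem_Icc] at hd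
  have hd0 : 0 < d := hd.1
  rw [← Finset.sum_filter]
  have e4 : ∑ b ∈ (Finset.Icc 1 (n*n)).filter (d ∣ ·), μ d * ((n*b/d - b^2/d : ℕ) : ℤ)
      = ∑ e ∈ Finset.Icc 1 (n*n/d), μ d * ((n*e - d*e^2 : ℕ) : ℤ) := by
    refine Finset.sum_nbij' (fun b => b / d) (fun e => d * e) ?_ ?_ ?_ ?_ ?_
    · intro b hb
      simp only [Finset.mem_filter, Finset.mem_Icc] at hb
      obtain ⟨⟨hb1, hb2⟩, hdb⟩ := hb
      rw [Finset.mem_Icc]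
      constructor
      · exact Nat.one_le_div_iff hd0 |>.mpr (Nat.le_of_dvd (by omega) hdb)
      · exact Nat.div_le_div_right hb2
    · intro e he
      rw [Finset.mem_Icc] at he
      simp only [Finset.mem_filter, Finset.mem_Icc]
      refine ⟨⟨by nlinarith [he.1], ?_⟩, Dvd.intro e rfl⟩
      calc d * e ≤ d * (n*n/d) := Nat.mul_le_mul_left d he.2
        _ ≤ n*n := Nat.mul_div_le _ _
    · intro b hb
      simp only [Finset.mem_filter] at hb
      exact Nat.mul_div_cancel' hb.2
    · intro e _
      exact Nat.mul_div_cancel_left e hd0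
    · intro b hb
      simp only [Finset.mem_filter, Finset.mem_Icc] at hb
      obtain ⟨⟨hb1, hb2⟩, hdb⟩ := hb
      obtain ⟨e, rfl⟩ := hdb
      simp only [Nat.mul_div_cancel_left e hd0]
      congr 2
      rw [show n * (d * e) = d * (n * e) by ring, Nat.mul_div_cancel_left _ hd0,
        show (d * e)^2 = d * (d * e^2) by ring, Nat.mul_div_cancel_left _ hd0]
  rw [e4]
  have e5 : ∑ e ∈ Finset.Icc 1 (n*n/d), μ d * ((n*e - d*e^2 : ℕ) : ℤ)
      = ∑ e ∈ Finset.Icc 1 (n*n), μ d * ((n*e - d*e^2 : ℕ) : ℤ) := by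
    apply Finset.sum_subset
    · exact Finset.Icc_subset_Icc le_rfl (Nat.div_le_self _ _)
    · intro e he hne
      rw [Finset.mem_Icc] at he
      rw [Finset.mem_Icc] at hne
      have hgt : n*n/d < e := by omega
      have : n * n < e * d := (Nat.div_lt_iff_lt_mul hd0).mp hgt
      have hne2 : n ≤ d * e := by nlinarith
      have : n * e ≤ d * e^2 := by nlinarith
      simp [Nat.sub_eq_zero_of_le this]
  rw [e5, ← Finset.mul_sum, Gn]
  push_cast
  ring


noncomputable def fns (n d : ℕ) : ℝ := (μ d : ℝ) * (Gn n d : ℝ) / (n:ℝ)^3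

lemma Gn_eq_zero {n d : ℕ} (h : n ≤ d) : Gn n d = 0 := by
  apply Finset.sum_eq_zero
  intro b hb
  rw [Finset.mem_Icc] at hb
  have h1 : n * b ≤ d * b := Nat.mul_le_mul_right b h
  have h2 : d * b ≤ d * b ^ 2 := Nat.mul_le_mul_left d (Nat.le_self_pow two_ne_zero b)
  exact Nat.sub_eq_zero_of_le (h1.trans h2)

lemma sum_id (K : ℕ) : ∑ b ∈ Finset.Icc 1 K, (b:ℝ) = K*(K+1)/2 := by
  induction K with
  | zero => simp
  | succ K ih =>
    rw [Finset.sum_Icc_succ_top (by omega), ih]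
    push_cast
    ring

lemma sum_sq (K : ℕ) : ∑ b ∈ Finset.Icc 1 K, (b:ℝ)^2 = K*(K+1)*(2*K+1)/6 := by
  induction K with
  | zero => simp
  | succ K ih =>
    rw [Finset.sum_Icc_succ_top (by omega), ih]
    push_cast
    ring

lemma Gn_closed (n d : ℕ) (hd : 0 < d) :
    (Gn n d : ℝ) = (n:ℝ) * (((n-1)/d : ℕ) * (((n-1)/d : ℕ)+1))/2
      - (d:ℝ) * (((n-1)/d : ℕ) * (((n-1)/d : ℕ)+1) * (2*((n-1)/d : ℕ)+1))/6 := by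
  set K := (n-1)/d with hK
  have hKn : K ≤ n*n := by
    calc K ≤ n - 1 := Nat.div_le_self _ _
      _ ≤ n*n := by nlinarith [Nat.sub_le n 1]
  have h1 : Gn n d = ∑ b ∈ Finset.Icc 1 K, (n*b - d*b^2) := by
    rw [Gn]
    symm
    apply Finset.sum_subset (Finset.Icc_subset_Icc le_rfl hKn)
    intro b hb hnb
    rw [Finset.mem_Icc] at hb hnb
    have hKb : K < b := by omega
    have hlt : n - 1 < b * d := (Nat.div_lt_iff_lt_mul hd).mp hKb
    have hnd : n ≤ b * d := by omega
    have hfin : n * b ≤ d * b^2 := by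
      calc n * b ≤ (b * d) * b := Nat.mul_le_mul_right b hnd
        _ = d * b^2 := by ring
    exact Nat.sub_eq_zero_of_le hfin
  have h2 : ∀ b ∈ Finset.Icc 1 K, ((n*b - d*b^2 : ℕ) : ℝ) = (n:ℝ)*b - (d:ℝ)*(b:ℝ)^2 := by
    intro b hb
    rw [Finset.mem_Icc] at hb
    have hdb : d * b ≤ n - 1 := by
      calc d * b ≤ d * K := Nat.mul_le_mul_left d hb.2
        _ ≤ n - 1 := Nat.mul_div_le _ _
    have : d * b^2 ≤ n * b := by nlinarith [hb.1, Nat.sub_le n 1]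
    push_cast [Nat.cast_sub this]
    ring
  rw [h1, Nat.cast_sum, Finset.sum_congr rfl h2, Finset.sum_sub_distrib, ← Finset.mul_sum,
    ← Finset.mul_sum, sum_id, sum_sq]
  ring

lemma t_tendsto (d : ℕ) (hd : 0 < d) :
    Tendsto (fun n : ℕ => (((n-1)/d : ℕ) : ℝ) / (n:ℝ)) atTop (𝓝 (1/(d:ℝ))) := by
  have hdR : (0:ℝ) < d := by exact_mod_cast hd
  have hlo : Tendsto (fun n : ℕ => (1 - (1+(d:ℝ))/(n:ℝ))/(d:ℝ)) atTop (𝓝 (1/(d:ℝ))) := by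
    have := (tendsto_const_nhds (x := (1:ℝ)) (f := atTop (α := ℕ))).sub
      (tendsto_const_div_atTop_nhds_zero_nat (1+(d:ℝ)))
    simpa using this.div_const (d:ℝ)
  apply tendsto_of_tendsto_of_tendsto_of_le_of_le' hlo tendsto_const_nhds
  · filter_upwards [eventually_ge_atTop 1] with n hn
    have hnR : (0:ℝ) < n := by exact_mod_cast hn
    rw [div_le_div_iff₀ hdR hnR]
    have h1 : n - 1 < d * ((n-1)/d) + d := by
      have hmod := Nat.div_add_mod (n-1) d
      have hm : (n-1) % d < d := Nat.mod_lt _ hd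
      calc n - 1 = d * ((n-1)/d) + (n-1) % d := hmod.symm
        _ < d * ((n-1)/d) + d := Nat.add_lt_add_left hm _
    have h2 : (n:ℝ) - 1 < (d:ℝ) * (((n-1)/d : ℕ):ℝ) + d := by
      have : ((n - 1 : ℕ):ℝ) < (d:ℝ) * (((n-1)/d : ℕ):ℝ) + d := by exact_mod_cast h1
      rw [Nat.cast_sub hn] at this
      push_cast at this
      linarith
    have h3 : (1 - (1+(d:ℝ))/(n:ℝ))*(n:ℝ) = (n:ℝ) - (1+(d:ℝ)) := by field_simp
    nlinarith [h2, h3]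
  · filter_upwards [eventually_ge_atTop 1] with n hn
    have hnR : (0:ℝ) < n := by exact_mod_cast hn
    rw [div_le_div_iff₀ hnR hdR]
    have h1 : d * ((n-1)/d) ≤ n - 1 := Nat.mul_div_le _ _
    have h2 : (d:ℝ) * (((n-1)/d : ℕ):ℝ) ≤ (n:ℝ) - 1 := by
      have : ((d * ((n-1)/d) : ℕ) : ℝ) ≤ ((n - 1 : ℕ):ℝ) := by exact_mod_cast h1
      rw [Nat.cast_sub hn] at this
      push_cast at this
      linarith
    nlinarith [h2]

lemma Gr_tendsto (d : ℕ) (hd : 0 < d) :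
    Tendsto (fun n : ℕ => (Gn n d : ℝ)/(n:ℝ)^3) atTop (𝓝 (1/(6*(d:ℝ)^2))) := by
  have hdR : (0:ℝ) < d := by exact_mod_cast hd
  set t : ℕ → ℝ := fun n => (((n-1)/d : ℕ) : ℝ) / (n:ℝ) with ht_def
  have ht := t_tendsto d hd
  have h0 : Tendsto (fun n : ℕ => 1/(n:ℝ)) atTop (𝓝 0) := tendsto_one_div_atTop_nhds_zero_nat
  have key : Tendsto (fun n : ℕ =>
      (1/2 : ℝ) * t n * (t n + 1/n) - (d:ℝ)/6 * (t n * ((t n + 1/n) * (2*t n + 1/n))))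
      atTop (𝓝 ((1/2 : ℝ) * (1/d) * (1/d + 0) - (d:ℝ)/6 * ((1/d) * ((1/d + 0) * (2*(1/d) + 0))))) := by
    exact ((tendsto_const_nhds.mul ht).mul (ht.add h0)).sub
      (tendsto_const_nhds.mul (ht.mul ((ht.add h0).mul ((tendsto_const_nhds.mul ht).add h0))))
  have hval : ((1/2 : ℝ) * (1/d) * (1/d + 0) - (d:ℝ)/6 * ((1/d) * ((1/d + 0) * (2*(1/d) + 0))))
      = 1/(6*(d:ℝ)^2) := by
    field_simp
    ring
  rw [hval] at key
  apply key.congr'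
  filter_upwards [eventually_ge_atTop 1] with n hn
  have hnR : (0:ℝ) < n := by exact_mod_cast hn
  rw [Gn_closed n d hd, ht_def]
  field_simp

lemma fns_tendsto (d : ℕ) :
    Tendsto (fun n : ℕ => fns n d) atTop (𝓝 ((μ d : ℝ)/(6*(d:ℝ)^2))) := by
  rcases Nat.eq_zero_or_pos d with rfl | hd
  · simp only [fns, ArithmeticFunction.map_zero, Int.cast_zero, zero_mul, zero_div]
    simpa using tendsto_const_nhds
  · have h1 : Tendsto (fun n : ℕ => (μ d : ℝ) * ((Gn n d : ℝ)/(n:ℝ)^3)) atTop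
        (𝓝 ((μ d : ℝ) * (1/(6*(d:ℝ)^2)))) := tendsto_const_nhds.mul (Gr_tendsto d hd)
    rw [mul_one_div] at h1
    apply h1.congr
    intro n
    rw [fns, mul_div_assoc]

lemma abs_mu_le (d : ℕ) : |(μ d : ℝ)| ≤ 1 := by
  have := ArithmeticFunction.abs_moebius_le_one (n := d)
  exact_mod_cast this

lemma fns_bound {n : ℕ} (hn : 1 ≤ n) (d : ℕ) : |fns n d| ≤ 1/(d:ℝ)^2 := by
  rcases Nat.eq_zero_or_pos d with rfl | hd
  · simp [fns, ArithmeticFunction.map_zero]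
  rcases le_or_gt n d with hnd | hdn
  · have h0 : fns n d = 0 := by simp [fns, Gn_eq_zero hnd]
    rw [h0, abs_zero]
    positivity
  -- 0 < d < n
  have hdR : (0:ℝ) < d := by exact_mod_cast hd
  have hnR : (0:ℝ) < n := by exact_mod_cast lt_of_le_of_lt (Nat.zero_le _) hdn
  have hdnR : (d:ℝ) ≤ n := by exact_mod_cast hdn.le
  set Q : ℝ := (((n-1)/d : ℕ) : ℝ) with hQdef
  have hQ0 : (0:ℝ) ≤ Q := Nat.cast_nonneg _
  have hQd : (d:ℝ) * Q ≤ (n:ℝ) - 1 := by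
    have h1 : d * ((n-1)/d) ≤ n - 1 := Nat.mul_div_le _ _
    have : ((d * ((n-1)/d) : ℕ) : ℝ) ≤ ((n - 1 : ℕ):ℝ) := by exact_mod_cast h1
    rw [Nat.cast_sub hn] at this
    push_cast at this
    linarith
  have hQ : Q ≤ (n:ℝ)/d := by
    rw [le_div_iff₀ hdR]
    nlinarith
  have hQ1 : Q + 1 ≤ 2*(n:ℝ)/d := by
    rw [le_div_iff₀ hdR]
    nlinarith
  have hG0 : (0:ℝ) ≤ (Gn n d : ℝ) := Nat.cast_nonneg _
  have hGle : (Gn n d : ℝ) ≤ (n:ℝ)^3/(d:ℝ)^2 := by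
    rw [Gn_closed n d hd, ← hQdef]
    have hprod : Q*(Q+1) ≤ ((n:ℝ)/d)*(2*(n:ℝ)/d) :=
      mul_le_mul hQ hQ1 (by positivity) (by positivity)
    have hA : (n:ℝ) * (Q*(Q+1)) ≤ (n:ℝ) * (((n:ℝ)/d)*(2*(n:ℝ)/d)) :=
      mul_le_mul_of_nonneg_left hprod hnR.le
    have h3 : (n:ℝ) * (((n:ℝ)/d)*(2*(n:ℝ)/d))/2 = (n:ℝ)^3/(d:ℝ)^2 := by
      field_simp
    have hB : (0:ℝ) ≤ (d:ℝ)*(Q*(Q+1)*(2*Q+1))/6 := by positivity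
    nlinarith [hA, h3, hB]
  have habs : |fns n d| = |(μ d : ℝ)| * ((Gn n d : ℝ)/(n:ℝ)^3) := by
    rw [fns, abs_div, abs_mul, abs_of_nonneg hG0, abs_of_pos (by positivity : (0:ℝ) < (n:ℝ)^3),
      mul_div_assoc]
  rw [habs]
  calc |(μ d : ℝ)| * ((Gn n d : ℝ)/(n:ℝ)^3) ≤ 1 * ((Gn n d : ℝ)/(n:ℝ)^3) :=
        mul_le_mul_of_nonneg_right (abs_mu_le d) (by positivity)
    _ = (Gn n d : ℝ)/(n:ℝ)^3 := one_mul _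
    _ ≤ ((n:ℝ)^3/(d:ℝ)^2)/(n:ℝ)^3 := by
        gcongr
    _ = 1/(d:ℝ)^2 := by
        field_simp

lemma moebius_summable : Summable (fun d : ℕ => (μ d : ℝ)/(d:ℝ)^2) := by
  apply Summable.of_norm_bounded (g := fun d : ℕ => 1/(d:ℝ)^2)
    (Real.summable_one_div_nat_pow.mpr one_lt_two)
  intro d
  rcases Nat.eq_zero_or_pos d with rfl | hd
  · simp [ArithmeticFunction.map_zero]
  · have hd2 : (0:ℝ) < (d:ℝ)^2 := by positivity
    rw [Real.norm_eq_abs, abs_div, abs_of_pos hd2]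
    gcongr
    exact abs_mu_le d

lemma moebius_tsum : ∑' d : ℕ, (μ d : ℝ)/(d:ℝ)^2 = 6/π^2 := by
  have hterm : ∀ d : ℕ, ((((μ d : ℝ)/(d:ℝ)^2) : ℝ) : ℂ) = LSeries.term (fun n => (μ n : ℂ)) 2 d := by
    intro d
    rcases eq_or_ne d 0 with rfl | hd0
    · simp [LSeries.term_def, ArithmeticFunction.map_zero]
    · rw [LSeries.term_def, if_neg hd0, show (2:ℂ) = ((2:ℕ):ℂ) by norm_num,
        Complex.cpow_natCast]
      push_cast
      ring
  have h2 : (1:ℝ) < (2:ℂ).re := by norm_num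
  have hmulz := ArithmeticFunction.LSeries_zeta_mul_Lseries_moebius h2
  rw [ArithmeticFunction.LSeries_zeta_eq_riemannZeta h2, riemannZeta_two] at hmulz
  have hpi : ((π:ℂ))^2 ≠ 0 := by
    simpa using Complex.ofReal_ne_zero.mpr Real.pi_ne_zero
  have hL : LSeries (fun n => ((μ n : ℤ) : ℂ)) 2 = 6/(π:ℂ)^2 := by
    field_simp at hmulz ⊢
    linear_combination hmulz
  apply Complex.ofReal_injective
  rw [Complex.ofReal_tsum]
  calc ∑' d : ℕ, (((μ d:ℝ)/(d:ℝ)^2 : ℝ):ℂ)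
      = ∑' d : ℕ, LSeries.term (fun n => (μ n : ℂ)) 2 d := tsum_congr hterm
    _ = LSeries (fun n => ((μ n : ℤ) : ℂ)) 2 := rfl
    _ = 6/(π:ℂ)^2 := hL
    _ = ((6/π^2 : ℝ) : ℂ) := by push_cast; ring


lemma tsum_fns_eq (n : ℕ) (hn : 1 ≤ n) :
    ∑' d : ℕ, fns n d = ∑ d ∈ Finset.Icc 1 (n*n), fns n d := by
  apply tsum_eq_sum
  intro d hd
  rw [Finset.mem_Icc] at hd
  push_neg at hd
  rcases Nat.eq_zero_or_pos d with rfl | hd0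
  · simp [fns, ArithmeticFunction.map_zero]
  · have h1 : n*n < d := hd hd0
    have hnd : n ≤ d := le_trans (Nat.le_mul_of_pos_left n hn) h1.le
    simp [fns, Gn_eq_zero hnd]

lemma card_div_tendsto :
    Tendsto (fun n : ℕ => (Nat.card (Q1 ∩ Set.Icc (1:ℝ) (n:ℝ) : Set ℝ) : ℝ) / (n:ℝ)^3)
      atTop (𝓝 (1/π^2)) := by
  have hlim : Tendsto (fun n : ℕ => ∑' d : ℕ, fns n d) atTop
      (𝓝 (∑' d : ℕ, (μ d : ℝ)/(6*(d:ℝ)^2))) := by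
    apply tendsto_tsum_of_dominated_convergence (bound := fun d : ℕ => 1/(d:ℝ)^2)
      (Real.summable_one_div_nat_pow.mpr one_lt_two) fns_tendsto
    filter_upwards [eventually_ge_atTop 1] with n hn d
    rw [Real.norm_eq_abs]
    exact fns_bound hn d
  have hval : ∑' d : ℕ, (μ d : ℝ)/(6*(d:ℝ)^2) = 1/π^2 := by
    have h1 : ∀ d : ℕ, (μ d : ℝ)/(6*(d:ℝ)^2) = ((μ d : ℝ)/(d:ℝ)^2)/6 := by
      intro d
      rw [div_div, mul_comm]
    calc ∑' d : ℕ, (μ d : ℝ)/(6*(d:ℝ)^2) = ∑' d : ℕ, ((μ d : ℝ)/(d:ℝ)^2)/6 := tsum_congr h1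
      _ = (∑' d : ℕ, (μ d : ℝ)/(d:ℝ)^2)/6 := tsum_div_const
      _ = (6/π^2)/6 := by rw [moebius_tsum]
      _ = 1/π^2 := by
          field_simp
  rw [hval] at hlim
  apply hlim.congr'
  filter_upwards [eventually_ge_atTop 1] with n hn
  rw [tsum_fns_eq n hn, card_eq n]
  have hZ : ((T n).card : ℤ) = ∑ d ∈ Finset.Icc 1 (n*n), μ d * (Gn n d : ℤ) := by
    rw [← stepB n hn, T, Finset.card_sigma]
    push_cast
    rfl
  have hR : ((T n).card : ℝ) = ∑ d ∈ Finset.Icc 1 (n*n), (μ d : ℝ) * (Gn n d : ℝ) := by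
    exact_mod_cast hZ
  rw [hR, Finset.sum_div]
  rfl

end Stmt7

/-- `#(ℚ₁ ∩ [1, n]) / (n³/π²) → 1` as `n → ∞`. -/
theorem stmt_7 :
    Tendsto
      (fun n : ℕ =>
        (Nat.card (Q1 ∩ Set.Icc (1 : ℝ) (n : ℝ) : Set ℝ) : ℝ) / ((n : ℝ) ^ 3 / π ^ 2))
      atTop (nhds 1) := by
  have h := Stmt7.card_div_tendsto.mul_const (π^2)
  have hval : (1/π^2) * π^2 = 1 := by
    field_simp
  rw [hval] at h
  apply h.congr
  intro n
  rw [div_div_eq_mul_div]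
  ring
end

section
/- Let ℚ₁ := {p/q : p, q positive integers with p > q²} ⊆ ℝ, and let (r_n)_{n ≥ 1} be the enumeration of ℚ₁ in increasing order (which exists since ℚ₁ ∩ [1, N] is finite for every N and ℚ₁ is unbounded). Then r_n is asymptotically equivalent to π^{2/3} · n^{1/3} as n → ∞; that is, r_n / (π^{2/3} n^{1/3}) tends to 1 as n → ∞. -/
open Filter Real

namespace Stmt8Aux

def cnt (b m : ℕ) : ℕ := ((Finset.Ioc (b^2) m).filter (fun a => Nat.Coprime a b)).card

noncomputable def cQ (X : ℝ) : ℕ := ∑ b ∈ Finset.Icc 1 ⌊X⌋₊, cnt b ⌊(b:ℝ) * X⌋₊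

noncomputable def QF (X : ℝ) : Finset ℝ :=
  (Finset.Icc 1 ⌊X⌋₊).biUnion fun b =>
    ((Finset.Ioc (b^2) ⌊(b:ℝ)*X⌋₊).filter (fun a => Nat.Coprime a b)).image
      (fun a : ℕ => (a:ℝ)/(b:ℝ))

lemma pair_inj {a₁ b₁ a₂ b₂ : ℕ} (h₁ : Nat.Coprime a₁ b₁) (h₂ : Nat.Coprime a₂ b₂)
    (hb₁ : 0 < b₁) (hb₂ : 0 < b₂)
    (h : (a₁ : ℝ) / b₁ = (a₂ : ℝ) / b₂) : a₁ = a₂ ∧ b₁ = b₂ := by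
  have hb₁' : (b₁ : ℝ) ≠ 0 := Nat.cast_ne_zero.mpr hb₁.ne'
  have hb₂' : (b₂ : ℝ) ≠ 0 := Nat.cast_ne_zero.mpr hb₂.ne'
  have hcross : a₁ * b₂ = a₂ * b₁ := by
    have : (a₁ : ℝ) * b₂ = a₂ * b₁ := by field_simp at h; linarith [h]
    exact_mod_cast this
  have hd : b₁ = b₂ := by
    have d12 : b₁ ∣ b₂ := h₁.symm.dvd_of_dvd_mul_left ⟨a₂, by rw [hcross]; ring⟩
    have d21 : b₂ ∣ b₁ := h₂.symm.dvd_of_dvd_mul_left ⟨a₁, by rw [← hcross]; ring⟩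
    exact Nat.dvd_antisymm d12 d21
  refine ⟨?_, hd⟩
  subst hd
  exact Nat.eq_of_mul_eq_mul_right hb₁ hcross

lemma mem_Q1_iff {x : ℝ} :
    x ∈ Q1 ↔ ∃ a b : ℕ, Nat.Coprime a b ∧ 0 < b ∧ b ^ 2 < a ∧ x = (a : ℝ) / b := by
  constructor
  · rintro ⟨p, q, hp, hq, hlt, rfl⟩
    have hg : 0 < Nat.gcd p q := Nat.gcd_pos_of_pos_left _ hp
    have hcop : Nat.Coprime (p / Nat.gcd p q) (q / Nat.gcd p q) :=
      Nat.coprime_div_gcd_div_gcd hg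
    obtain ⟨a, ha⟩ := Nat.gcd_dvd_left p q
    obtain ⟨b, hb⟩ := Nat.gcd_dvd_right p q
    set g := Nat.gcd p q with hgdef
    have hpa : p / g = a := by rw [ha]; exact Nat.mul_div_cancel_left a hg
    have hqb : q / g = b := by rw [hb]; exact Nat.mul_div_cancel_left b hg
    rw [hpa, hqb] at hcop
    have hbpos : 0 < b := by
      rcases Nat.eq_zero_or_pos b with h0 | h
      · subst h0; simp [hb] at hq
      · exact h
    refine ⟨a, b, hcop, hbpos, ?_, ?_⟩
    · have h2 : (g*b)^2 < g*a := by rw [← ha, ← hb]; exact hlt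
      have h3 : g * b ^ 2 < a := Nat.lt_of_mul_lt_mul_left (a := g)
        (by calc g*(g*b^2) = (g*b)^2 := by ring
              _ < g*a := h2)
      exact lt_of_le_of_lt (Nat.le_mul_of_pos_left _ hg) h3
    · rw [ha, hb]
      have hgR : (g : ℝ) ≠ 0 := Nat.cast_ne_zero.mpr hg.ne'
      push_cast
      rw [mul_comm (g:ℝ) (a:ℝ), mul_comm (g:ℝ) (b:ℝ), mul_div_mul_right _ _ hgR]
  · rintro ⟨a, b, _, hb, hlt, rfl⟩
    exact ⟨a, b, lt_of_le_of_lt (Nat.zero_le _) hlt, hb, hlt, rfl⟩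

end Stmt8Aux

namespace Stmt8Aux

lemma coe_QF (X : ℝ) : (QF X : Set ℝ) = Q1 ∩ Set.Iic X := by
  ext x
  simp only [QF, Finset.coe_biUnion, Set.mem_iUnion, Finset.mem_coe, Finset.mem_image,
    Finset.mem_filter, Finset.mem_Ioc, Finset.mem_Icc, Set.mem_inter_iff, Set.mem_Iic]
  constructor
  · rintro ⟨b, hb, a, ⟨⟨hlt, hle⟩, hcop⟩, rfl⟩
    have hb1 : 0 < b := hb.1
    have hbR : (0:ℝ) < b := Nat.cast_pos.mpr hb1
    have hXpos : 0 ≤ (b:ℝ) * X := by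
      by_contra hneg
      push_neg at hneg
      have : ⌊(b:ℝ)*X⌋₊ = 0 := Nat.floor_eq_zero.mpr (by linarith [hneg])
      omega
    constructor
    · exact mem_Q1_iff.mpr ⟨a, b, hcop, hb1, hlt, rfl⟩
    · have haX : (a:ℝ) ≤ (b:ℝ) * X := le_trans (Nat.cast_le.mpr hle) (Nat.floor_le hXpos)
      rw [div_le_iff₀ hbR]
      linarith [haX]
  · rintro ⟨hx, hxX⟩
    obtain ⟨a, b, hcop, hb, hlt, rfl⟩ := mem_Q1_iff.mp hx
    have hbR : (0:ℝ) < b := Nat.cast_pos.mpr hb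
    have haX : (a:ℝ) ≤ (b:ℝ) * X := by
      rw [div_le_iff₀ hbR] at hxX; linarith [hxX]
    have hbX : (b:ℝ) ≤ X := by
      have hab : (b:ℝ) * (b:ℝ) < a := by
        have := hlt
        have : ((b^2 : ℕ) : ℝ) < a := Nat.cast_lt.mpr hlt
        push_cast at this; nlinarith [this]
      nlinarith [haX, hbR]
    refine ⟨b, ⟨hb, Nat.le_floor hbX⟩, a, ⟨⟨hlt, Nat.le_floor haX⟩, hcop⟩, rfl⟩

lemma card_QF (X : ℝ) : (QF X).card = cQ X := by
  rw [QF, Finset.card_biUnion, cQ]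
  · refine Finset.sum_congr rfl (fun b hb => ?_)
    rw [Finset.card_image_of_injOn, cnt]
    intro a₁ h1 a₂ h2 h
    have hb1 : 0 < b := (Finset.mem_Icc.mp hb).1
    simp only [Finset.mem_coe, Finset.mem_filter, Finset.mem_Ioc] at h1 h2
    exact (pair_inj h1.2 h2.2 hb1 hb1 h).1
  · intro b₁ hb₁ b₂ hb₂ hne
    rw [Function.onFun, Finset.disjoint_left]
    rintro x hx1 hx2
    simp only [Finset.mem_image, Finset.mem_filter, Finset.mem_Ioc] at hx1 hx2
    obtain ⟨a₁, ⟨⟨hlt1, _⟩, hc1⟩, rfl⟩ := hx1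
    obtain ⟨a₂, ⟨⟨hlt2, _⟩, hc2⟩, heq⟩ := hx2
    have h1 : 0 < b₁ := (Finset.mem_Icc.mp hb₁).1
    have h2 : 0 < b₂ := (Finset.mem_Icc.mp hb₂).1
    exact hne ((pair_inj hc2 hc1 h2 h1 heq).2.symm)

lemma one_lt_of_mem_Q1 {x : ℝ} (hx : x ∈ Q1) : 1 < x := by
  obtain ⟨p, q, hp, hq, hlt, rfl⟩ := hx
  have hqR : (0:ℝ) < q := Nat.cast_pos.mpr hq
  rw [lt_div_iff₀ hqR]
  have h1 : ((q:ℝ))^2 < p := by exact_mod_cast hlt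
  have h2 : (1:ℝ) ≤ q := by exact_mod_cast hq
  nlinarith [h1, h2]

end Stmt8Aux

namespace Stmt8Aux

section enum
variable (f : ℕ → ℝ) (hmono : StrictMono f) (hrange : Set.range f = Q1)

include hmono hrange in
lemma Q1_inter_Iic (n : ℕ) : Q1 ∩ Set.Iic (f n) = f '' Set.Iic n := by
  ext x
  constructor
  · rintro ⟨hx, hle⟩
    have hx' : x ∈ Set.range f := by rw [hrange]; exact hx
    obtain ⟨m, rfl⟩ := hx'
    exact ⟨m, by simpa using (hmono.le_iff_le).mp hle, rfl⟩
  · rintro ⟨m, hm, rfl⟩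
    refine ⟨by rw [← hrange]; exact Set.mem_range_self m, hmono.monotone (by simpa using hm)⟩

include hmono hrange in
lemma cQ_f (n : ℕ) : cQ (f n) = n + 1 := by
  have h1 : (QF (f n) : Set ℝ) = f '' Set.Iic n := by
    rw [coe_QF]; exact Q1_inter_Iic f hmono hrange n
  have h2 : QF (f n) = Finset.image f (Finset.Iic n) := by
    apply Finset.coe_injective
    rw [h1, Finset.coe_image, Finset.coe_Iic]
  rw [← card_QF, h2, Finset.card_image_of_injective _ hmono.injective, Nat.card_Iic]

include hmono hrange in
lemma f_tendsto : Tendsto f atTop atTop := by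
  rw [tendsto_atTop_atTop]
  intro M
  have hmem : ((⌈M⌉₊ + 2 : ℕ) : ℝ) ∈ Q1 :=
    ⟨⌈M⌉₊ + 2, 1, by omega, one_pos, by omega, by push_cast; ring⟩
  rw [← hrange] at hmem
  obtain ⟨m, hm⟩ := hmem
  refine ⟨m, fun n hn => ?_⟩
  have : f m ≤ f n := hmono.monotone hn
  have hM : M ≤ ((⌈M⌉₊ + 2 : ℕ) : ℝ) := by
    push_cast
    rcases le_or_gt M 0 with h | h
    · linarith [h]
    · linarith [Nat.le_ceil M]
  linarith [hM, hm ▸ this]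

end enum
end Stmt8Aux

namespace Stmt8Aux
open ArithmeticFunction
open scoped ArithmeticFunction.Moebius ArithmeticFunction.zeta

lemma moebius_sum_eq {n : ℕ} (hn : n ≠ 0) :
    ∑ d ∈ n.divisors, (μ d : ℤ) = if n = 1 then 1 else 0 := by
  have h := congrArg (fun g : ArithmeticFunction ℤ => g n) moebius_mul_coe_zeta
  simp only [mul_apply, one_apply] at h
  rw [Nat.sum_divisorsAntidiagonal (fun d e => (μ d : ℤ) * (ζ : ArithmeticFunction ℤ) e)] at h
  rw [← h]
  refine Finset.sum_congr rfl (fun d hd => ?_)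
  have hd0 : 0 < d := Nat.pos_of_mem_divisors hd
  rw [Nat.mem_divisors] at hd
  have h2 : n / d ≠ 0 :=
    (Nat.div_pos (Nat.le_of_dvd (Nat.pos_of_ne_zero hn) hd.1) hd0).ne'
  simp [natCoe_apply, zeta_apply, h2]

lemma divisors_gcd_eq (a b : ℕ) (hb : b ≠ 0) :
    (Nat.gcd a b).divisors = b.divisors.filter (· ∣ a) := by
  ext d
  simp only [Nat.mem_divisors, Finset.mem_filter, Nat.dvd_gcd_iff]
  constructor
  · rintro ⟨⟨hda, hdb⟩, -⟩; exact ⟨⟨hdb, hb⟩, hda⟩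
  · rintro ⟨⟨hdb, -⟩, hda⟩
    exact ⟨⟨hda, hdb⟩, Nat.gcd_ne_zero_right hb⟩

lemma card_dvd_Ioc (d lo hi : ℕ) (h : lo ≤ hi) :
    ((Finset.Ioc lo hi).filter (d ∣ ·)).card = hi / d - lo / d := by
  have hu : Finset.Ioc 0 lo ∪ Finset.Ioc lo hi = Finset.Ioc 0 hi :=
    Finset.Ioc_union_Ioc_eq_Ioc (Nat.zero_le lo) h
  have hdisj : Disjoint (Finset.Ioc 0 lo) (Finset.Ioc lo hi) := by
    rw [Finset.disjoint_left]
    intro x hx1 hx2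
    rw [Finset.mem_Ioc] at hx1 hx2
    omega
  have := congrArg (fun s => (s.filter (d ∣ ·)).card) hu
  simp only [Finset.filter_union] at this
  rw [Finset.card_union_of_disjoint (Finset.disjoint_filter_filter hdisj)] at this
  rw [Nat.Ioc_filter_dvd_card_eq_div, Nat.Ioc_filter_dvd_card_eq_div] at this
  omega

lemma cnt_eq {b m : ℕ} (hb : 0 < b) (hm : b ^ 2 ≤ m) :
    (cnt b m : ℤ) = ∑ d ∈ b.divisors, (μ d : ℤ) * ((m / d : ℕ) - ((b ^ 2 / d : ℕ)) : ℤ) := by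
  rw [cnt, Finset.card_filter]
  push_cast
  have step1 : ∀ a ∈ Finset.Ioc (b^2) m, ((if Nat.Coprime a b then 1 else 0 : ℤ))
      = ∑ d ∈ b.divisors.filter (· ∣ a), (μ d : ℤ) := by
    intro a _
    rw [← divisors_gcd_eq a b hb.ne', moebius_sum_eq (Nat.gcd_ne_zero_right hb.ne')]
  rw [Finset.sum_congr rfl step1]
  simp only [Finset.sum_filter]
  rw [Finset.sum_comm]
  refine Finset.sum_congr rfl (fun d hd => ?_)
  rw [← Finset.sum_filter, Finset.sum_const, card_dvd_Ioc d (b^2) m hm, nsmul_eq_mul]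
  have hle : b^2/d ≤ m/d := Nat.div_le_div_right hm
  push_cast [Nat.cast_sub hle]
  ring

end Stmt8Aux

namespace Stmt8Aux
open ArithmeticFunction
open scoped ArithmeticFunction.Moebius ArithmeticFunction.zeta

lemma cQ_eq (X : ℝ) (hX : 1 ≤ X) :
    (cQ X : ℤ) = ∑ d ∈ Finset.Icc 1 ⌊X⌋₊, (μ d : ℤ) *
      ∑ e ∈ Finset.Icc 1 (⌊X⌋₊ / d), ((⌊(e:ℝ)*X⌋₊ : ℤ) - (d:ℤ) * (e:ℤ)^2) := by
  set B := ⌊X⌋₊ with hB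
  have hfloor_ge : ∀ b ∈ Finset.Icc 1 B, b ^ 2 ≤ ⌊(b:ℝ)*X⌋₊ := by
    intro b hb
    rw [Finset.mem_Icc] at hb
    have hbX : (b:ℝ) ≤ X := by
      calc (b:ℝ) ≤ (B:ℝ) := Nat.cast_le.mpr hb.2
        _ ≤ X := Nat.floor_le (by linarith)
    refine Nat.le_floor ?_
    push_cast
    have h1 : (1:ℝ) ≤ (b:ℝ) := by exact_mod_cast hb.1
    nlinarith [hbX, h1]
  rw [cQ]
  push_cast
  rw [Finset.sum_congr rfl (fun b hb => cnt_eq (Finset.mem_Icc.mp hb).1 (hfloor_ge b hb))]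
  rw [Finset.sum_sigma']
  have hrhs : ∀ d ∈ Finset.Icc 1 B, (μ d : ℤ) *
      ∑ e ∈ Finset.Icc 1 (B / d), ((⌊(e:ℝ)*X⌋₊ : ℤ) - (d:ℤ) * (e:ℤ)^2)
      = ∑ e ∈ Finset.Icc 1 (B / d), (μ d : ℤ) * ((⌊(e:ℝ)*X⌋₊ : ℤ) - (d:ℤ) * (e:ℤ)^2) :=
    fun d _ => Finset.mul_sum _ _ _
  rw [Finset.sum_congr rfl hrhs, Finset.sum_sigma']
  refine Finset.sum_nbij' (fun x => ⟨x.2, x.1 / x.2⟩) (fun y => ⟨y.1 * y.2, y.1⟩) ?_ ?_ ?_ ?_ ?_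
  · rintro ⟨b, d⟩ hx
    simp only [Finset.mem_sigma, Finset.mem_Icc, Nat.mem_divisors] at hx ⊢
    obtain ⟨⟨hb1, hbB⟩, hdb, hb0⟩ := hx
    have hd0 : 0 < d := Nat.pos_of_dvd_of_pos hdb (by omega)
    refine ⟨⟨hd0, le_trans (Nat.le_of_dvd (by omega) hdb) hbB⟩, ?_, Nat.div_le_div_right hbB⟩
    exact Nat.one_le_div_iff hd0 |>.mpr (Nat.le_of_dvd (by omega) hdb)
  · rintro ⟨d, e⟩ hy
    simp only [Finset.mem_sigma, Finset.mem_Icc, Nat.mem_divisors] at hy ⊢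
    obtain ⟨⟨hd1, hdB⟩, he1, heB⟩ := hy
    refine ⟨⟨?_, ?_⟩, Dvd.intro e rfl, by positivity⟩
    · exact Nat.one_le_iff_ne_zero.mpr (by positivity)
    · exact le_trans (Nat.mul_le_mul_left d heB) (Nat.mul_div_le B d) |>.trans_eq rfl
  · rintro ⟨b, d⟩ hx
    simp only [Finset.mem_sigma, Finset.mem_Icc, Nat.mem_divisors] at hx
    have : d * (b / d) = b := Nat.mul_div_cancel' hx.2.1
    simp [this]
  · rintro ⟨d, e⟩ hy
    simp only [Finset.mem_sigma, Finset.mem_Icc] at hy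
    have hd0 : 0 < d := by omega
    have : d * e / d = e := Nat.mul_div_cancel_left e hd0
    simp [this]
  · rintro ⟨b, d⟩ hx
    simp only [Finset.mem_sigma, Finset.mem_Icc, Nat.mem_divisors] at hx
    obtain ⟨⟨hb1, hbB⟩, hdb, hb0⟩ := hx
    have hd0 : 0 < d := Nat.pos_of_dvd_of_pos hdb (by omega)
    obtain ⟨e, rfl⟩ := hdb
    have h1 : (d * e) ^ 2 / d = d * e ^ 2 := by
      rw [show (d*e)^2 = d * (d * e^2) by ring]
      exact Nat.mul_div_cancel_left _ hd0
    have h2 : ⌊((d*e : ℕ):ℝ)*X⌋₊ / d = ⌊(e:ℝ)*X⌋₊ := by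
      rw [show ((d*e : ℕ):ℝ)*X = ((e:ℝ)*X) * d by push_cast; ring]
      rw [← Nat.floor_div_natCast (((e:ℝ)*X) * d) d]
      rw [mul_div_assoc, div_self (by exact_mod_cast hd0.ne'), mul_one]
    have h3 : d * e / d = e := Nat.mul_div_cancel_left e hd0
    simp only [h3]
    rw [h1, h2]
    push_cast
    ring

end Stmt8Aux

namespace Stmt8Aux

lemma sum_Icc_id_real (E : ℕ) : ∑ e ∈ Finset.Icc 1 E, (e:ℝ) = E*(E+1)/2 := by
  induction E with
  | zero => simp
  | succ n ih =>
    rw [Finset.sum_Icc_succ_top (by omega : 1 ≤ n + 1), ih]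
    push_cast; ring

lemma sum_Icc_sq_real (E : ℕ) : ∑ e ∈ Finset.Icc 1 E, (e:ℝ)^2 = E*(E+1)*(2*E+1)/6 := by
  induction E with
  | zero => simp
  | succ n ih =>
    rw [Finset.sum_Icc_succ_top (by omega : 1 ≤ n + 1), ih]
    push_cast; ring

lemma alg_est (X u dd : ℝ) (hX : 1 ≤ X) (hdd1 : 1 ≤ dd) (hu1 : 1 ≤ u)
    (hddX : dd ≤ X) (hduX : dd*u ≤ X) (hXdu : X ≤ dd*u + 2*dd) :
    |X*(u*(u+1))/2 - dd*(u*(u+1)*(2*u+1))/6 - X^3/(6*dd^2)| ≤ 6*X := by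
  have hdd0 : dd ≠ 0 := by linarith
  set δ := X/dd - u with hδ
  clear_value δ
  have hδ0 : 0 ≤ δ := by
    rw [hδ, sub_nonneg, le_div_iff₀ (by linarith)]
    linarith [hduX]
  have hδ2 : δ ≤ 2 := by
    rw [hδ, sub_le_iff_le_add, div_le_iff₀ (by linarith)]
    nlinarith [hXdu, hdd1]
  have hXeq : X = dd * (u + δ) := by
    rw [hδ]; field_simp; ring
  have key : X * (u*(u+1))/2 - dd * (u*(u+1)*(2*u+1))/6 - X^3/(6*dd^2)
      = dd * (-u/6 + δ*u/2 - u*δ^2/2 - δ^3/6) := by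
    rw [hXeq]
    field_simp
    ring
  have hu0 : (0:ℝ) ≤ u := by linarith
  have h2 : δ*u ≤ 2*u := by nlinarith [hδ0, hδ2, hu0]
  have h3 : (0:ℝ) ≤ u*δ^2 := mul_nonneg hu0 (sq_nonneg δ)
  have h4 : (0:ℝ) ≤ δ^3 := pow_nonneg hδ0 3
  have h5 : (0:ℝ) ≤ δ*u := mul_nonneg hδ0 hu0
  have h6 : u*δ^2 ≤ 4*u := by nlinarith [hδ0, hδ2, hu0]
  have h7 : δ^3 ≤ 8 := by nlinarith [hδ0, hδ2]
  have hwbound : |(-u/6 + δ*u/2 - u*δ^2/2 - δ^3/6)| ≤ 4*u + 2 := by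
    rw [abs_le]
    constructor
    · nlinarith [hu0, h5, h6, h7]
    · nlinarith [hu0, h2, h3, h4]
  rw [key, abs_mul, abs_of_pos (show (0:ℝ) < dd by linarith)]
  calc dd * |(-u/6 + δ*u/2 - u*δ^2/2 - δ^3/6)| ≤ dd * (4*u + 2) :=
        mul_le_mul_of_nonneg_left hwbound (by linarith)
    _ = 4*(dd*u) + 2*dd := by ring
    _ ≤ 4*X + 2*X := by linarith [hduX, hddX]
    _ = 6*X := by ring

lemma inner_est (X : ℝ) (hX : 1 ≤ X) (d : ℕ) (hd : d ∈ Finset.Icc 1 ⌊X⌋₊) :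
    |(∑ e ∈ Finset.Icc 1 (⌊X⌋₊/d), ((⌊(e:ℝ)*X⌋₊:ℝ) - (d:ℝ)*(e:ℝ)^2)) - X^3/(6*(d:ℝ)^2)|
      ≤ 7*X := by
  rw [Finset.mem_Icc] at hd
  obtain ⟨hd1, hdB⟩ := hd
  set E := ⌊X⌋₊ / d with hE
  have hdd1 : (1:ℝ) ≤ (d:ℝ) := by exact_mod_cast hd1
  have hBX : (⌊X⌋₊:ℝ) ≤ X := Nat.floor_le (by linarith)
  have hddX : (d:ℝ) ≤ X := le_trans (by exact_mod_cast hdB) hBX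
  have hE1 : 1 ≤ E := Nat.one_le_div_iff (by omega) |>.mpr hdB
  have hu1 : (1:ℝ) ≤ (E:ℝ) := by exact_mod_cast hE1
  have hduX : (d:ℝ) * (E:ℝ) ≤ X := by
    have h1 : E * d ≤ ⌊X⌋₊ := Nat.div_mul_le_self _ _
    calc (d:ℝ) * (E:ℝ) = ((E * d : ℕ) : ℝ) := by push_cast; ring
      _ ≤ (⌊X⌋₊:ℝ) := Nat.cast_le.mpr h1
      _ ≤ X := hBX
  have hXdu : X ≤ (d:ℝ) * (E:ℝ) + 2 * (d:ℝ) := by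
    have h1 : X < (⌊X⌋₊:ℝ) + 1 := Nat.lt_floor_add_one X
    have h2 : ⌊X⌋₊ < d * E + d := by
      have ha := Nat.div_add_mod ⌊X⌋₊ d
      have hb := Nat.mod_lt ⌊X⌋₊ (show 0 < d by omega)
      rw [hE]
      omega
    have h3 : ((⌊X⌋₊ + 1 : ℕ):ℝ) ≤ ((d * E + d : ℕ):ℝ) := Nat.cast_le.mpr (by omega)
    push_cast at h3
    linarith
  have hsplit : ∑ e ∈ Finset.Icc 1 E, ((⌊(e:ℝ)*X⌋₊:ℝ) - (d:ℝ)*(e:ℝ)^2)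
      = (∑ e ∈ Finset.Icc 1 E, ((⌊(e:ℝ)*X⌋₊:ℝ) - (e:ℝ)*X))
        + (X * ((E:ℝ)*((E:ℝ)+1))/2 - (d:ℝ) * ((E:ℝ)*((E:ℝ)+1)*(2*(E:ℝ)+1))/6) := by
    rw [Finset.sum_sub_distrib, Finset.sum_sub_distrib, ← Finset.mul_sum,
      ← Finset.sum_mul, sum_Icc_id_real, sum_Icc_sq_real]
    ring
  have herr : |∑ e ∈ Finset.Icc 1 E, ((⌊(e:ℝ)*X⌋₊:ℝ) - (e:ℝ)*X)| ≤ (E:ℝ) := by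
    calc |∑ e ∈ Finset.Icc 1 E, ((⌊(e:ℝ)*X⌋₊:ℝ) - (e:ℝ)*X)|
        ≤ ∑ e ∈ Finset.Icc 1 E, |(⌊(e:ℝ)*X⌋₊:ℝ) - (e:ℝ)*X| := Finset.abs_sum_le_sum_abs _ _
      _ ≤ ∑ e ∈ Finset.Icc 1 E, 1 := by
          refine Finset.sum_le_sum (fun e he => ?_)
          have heX : (0:ℝ) ≤ (e:ℝ)*X := by positivity
          rw [abs_le]
          constructor
          · linarith [Nat.lt_floor_add_one ((e:ℝ)*X)]
          · linarith [Nat.floor_le heX]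
      _ = (E:ℝ) := by simp
  have hmain := alg_est X (E:ℝ) (d:ℝ) hX hdd1 hu1 hddX (by linarith [hduX]) (by linarith [hXdu])
  have huX : (E:ℝ) ≤ X := by nlinarith [hduX, hdd1, hu1]
  calc |(∑ e ∈ Finset.Icc 1 E, ((⌊(e:ℝ)*X⌋₊:ℝ) - (d:ℝ)*(e:ℝ)^2)) - X^3/(6*(d:ℝ)^2)|
      = |(∑ e ∈ Finset.Icc 1 E, ((⌊(e:ℝ)*X⌋₊:ℝ) - (e:ℝ)*X))
          + (X * ((E:ℝ)*((E:ℝ)+1))/2 - (d:ℝ) * ((E:ℝ)*((E:ℝ)+1)*(2*(E:ℝ)+1))/6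
             - X^3/(6*(d:ℝ)^2))| := by
        rw [hsplit, add_sub_assoc]
    _ ≤ |∑ e ∈ Finset.Icc 1 E, ((⌊(e:ℝ)*X⌋₊:ℝ) - (e:ℝ)*X)|
          + |X * ((E:ℝ)*((E:ℝ)+1))/2 - (d:ℝ) * ((E:ℝ)*((E:ℝ)+1)*(2*(E:ℝ)+1))/6
             - X^3/(6*(d:ℝ)^2)| := abs_add_le _ _
    _ ≤ (E:ℝ) + 6*X := add_le_add herr hmain
    _ ≤ 7*X := by linarith [huX]

end Stmt8Aux

namespace Stmt8Aux
open ArithmeticFunction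
open scoped ArithmeticFunction.Moebius ArithmeticFunction.zeta

lemma summable_moebius_div_sq : Summable (fun d : ℕ => (μ d : ℝ) / (d:ℝ)^2) := by
  refine Summable.of_abs (Summable.of_nonneg_of_le (fun d => abs_nonneg _) (fun d => ?_)
    (Real.summable_one_div_nat_pow.mpr (by norm_num : 1 < 2)))
  rcases Nat.eq_zero_or_pos d with rfl | hd
  · simp
  · rw [abs_div, abs_of_nonneg (by positivity : (0:ℝ) ≤ (d:ℝ)^2), div_le_div_iff₀ (by positivity) (by positivity), one_mul]
    have : |(μ d : ℝ)| ≤ 1 := by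
      have h := abs_moebius_le_one (n := d)
      calc |(μ d : ℝ)| = ((|μ d| : ℤ) : ℝ) := by push_cast; simp
        _ ≤ 1 := by exact_mod_cast h
    nlinarith [this, sq_nonneg (d:ℝ)]

lemma hasSum_moebius_div_sq :
    HasSum (fun d : ℕ => (μ d : ℝ) / (d:ℝ)^2) (6 / π^2) := by
  have hsum := summable_moebius_div_sq
  have hpi : (π:ℝ) ≠ 0 := Real.pi_ne_zero
  have hs2 : (1:ℝ) < (2:ℂ).re := by norm_num
  have hzeta := ArithmeticFunction.LSeries_zeta_mul_Lseries_moebius hs2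
  rw [ArithmeticFunction.LSeries_zeta_eq_riemannZeta hs2, riemannZeta_two] at hzeta
  have hpiC : ((π:ℂ))^2 ≠ 0 := pow_ne_zero 2 (Complex.ofReal_ne_zero.mpr hpi)
  have hmu : LSeries (fun n : ℕ => ((μ n : ℤ) : ℂ)) 2 = 6/(π:ℂ)^2 := by
    rw [eq_div_iff hpiC]
    field_simp at hzeta
    linear_combination hzeta
  -- identify the complex LSeries with the real sum
  have hterm : ∀ n : ℕ, LSeries.term (fun n : ℕ => ((μ n : ℤ) : ℂ)) 2 n
      = (((μ n : ℝ) / (n:ℝ)^2 : ℝ) : ℂ) := by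
    intro n
    rcases Nat.eq_zero_or_pos n with rfl | hn
    · simp [LSeries.term]
    · rw [LSeries.term_of_ne_zero hn.ne']
      rw [show ((2:ℂ)) = ((2:ℕ):ℂ) by norm_num, Complex.cpow_natCast]
      push_cast
      ring
  have hofreal : (∑' n : ℕ, (((μ n : ℝ) / (n:ℝ)^2 : ℝ) : ℂ)) = ((6/π^2 : ℝ) : ℂ) := by
    rw [← funext hterm]
    have : (∑' n : ℕ, LSeries.term (fun n : ℕ => ((μ n : ℤ) : ℂ)) 2 n) = 6/(π:ℂ)^2 := hmu
    rw [this]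
    push_cast
    ring
  have : ((∑' n : ℕ, (μ n : ℝ) / (n:ℝ)^2 : ℝ) : ℂ) = ((6/π^2 : ℝ) : ℂ) := by
    rw [Complex.ofReal_tsum]
    exact hofreal
  have htsum : (∑' n : ℕ, (μ n : ℝ) / (n:ℝ)^2) = 6/π^2 := by exact_mod_cast this
  exact htsum ▸ hsum.hasSum

noncomputable def merr (B : ℕ) : ℝ := |(∑ d ∈ Finset.Icc 1 B, (μ d : ℝ)/(d:ℝ)^2) - 6/π^2|

lemma merr_tendsto : Tendsto merr atTop (nhds 0) := by
  have h := hasSum_moebius_div_sq.tendsto_sum_nat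
  have hIcc : ∀ B : ℕ, ∑ d ∈ Finset.range (B+1), (μ d : ℝ)/(d:ℝ)^2
      = ∑ d ∈ Finset.Icc 1 B, (μ d : ℝ)/(d:ℝ)^2 := by
    intro B
    induction B with
    | zero => simp
    | succ n ih =>
      rw [Finset.sum_range_succ, ih, Finset.sum_Icc_succ_top (by omega : 1 ≤ n + 1)]
  have h2 : Tendsto (fun B : ℕ => ∑ d ∈ Finset.Icc 1 B, (μ d : ℝ)/(d:ℝ)^2) atTop
      (nhds (6/π^2)) := by
    have := h.comp (tendsto_add_atTop_nat 1)
    simpa only [Function.comp_def, hIcc] using this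
  have h3 := (h2.sub_const (6/π^2)).abs
  convert h3 using 2
  · simp only [merr]
  · simp

end Stmt8Aux

namespace Stmt8Aux
open ArithmeticFunction
open scoped ArithmeticFunction.Moebius ArithmeticFunction.zeta

lemma abs_mu_real_le (d : ℕ) : |(μ d : ℝ)| ≤ 1 := by
  have h := abs_moebius_le_one (n := d)
  calc |(μ d : ℝ)| = ((|μ d| : ℤ) : ℝ) := by push_cast; simp
    _ ≤ 1 := by exact_mod_cast h

lemma main_est (X : ℝ) (hX : 1 ≤ X) :
    |(cQ X : ℝ) - X^3/π^2| ≤ 7*X^2 + X^3/6 * merr ⌊X⌋₊ := by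
  set B := ⌊X⌋₊ with hB
  have hBX : (B:ℝ) ≤ X := Nat.floor_le (by linarith)
  have h0 : (cQ X : ℝ) = ∑ d ∈ Finset.Icc 1 B, (μ d : ℝ) *
      ∑ e ∈ Finset.Icc 1 (B / d), ((⌊(e:ℝ)*X⌋₊:ℝ) - (d:ℝ)*(e:ℝ)^2) := by
    have := cQ_eq X hX
    exact_mod_cast this
  set S : ℕ → ℝ := fun d => ∑ e ∈ Finset.Icc 1 (B / d), ((⌊(e:ℝ)*X⌋₊:ℝ) - (d:ℝ)*(e:ℝ)^2)
    with hS
  have key : ∀ d ∈ Finset.Icc 1 B, (μ d:ℝ) * S d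
      = (μ d:ℝ)*(S d - X^3/(6*(d:ℝ)^2)) + (X^3/6) * ((μ d:ℝ)/(d:ℝ)^2) := by
    intro d hd
    have hd0 : (d:ℝ) ≠ 0 := by
      have := (Finset.mem_Icc.mp hd).1
      positivity
    field_simp
    ring
  have h1 : (cQ X : ℝ) = (∑ d ∈ Finset.Icc 1 B, (μ d:ℝ)*(S d - X^3/(6*(d:ℝ)^2)))
      + (X^3/6) * (∑ d ∈ Finset.Icc 1 B, (μ d:ℝ)/(d:ℝ)^2) := by
    rw [h0, Finset.sum_congr rfl key, Finset.sum_add_distrib, ← Finset.mul_sum]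
  have h2 : (cQ X : ℝ) - X^3/π^2 = (∑ d ∈ Finset.Icc 1 B, (μ d:ℝ)*(S d - X^3/(6*(d:ℝ)^2)))
      + (X^3/6) * ((∑ d ∈ Finset.Icc 1 B, (μ d:ℝ)/(d:ℝ)^2) - 6/π^2) := by
    rw [h1]
    have hpi : (π:ℝ) ≠ 0 := Real.pi_ne_zero
    ring
  rw [h2]
  have hbnd1 : |∑ d ∈ Finset.Icc 1 B, (μ d:ℝ)*(S d - X^3/(6*(d:ℝ)^2))| ≤ 7*X^2 := by
    calc |∑ d ∈ Finset.Icc 1 B, (μ d:ℝ)*(S d - X^3/(6*(d:ℝ)^2))|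
        ≤ ∑ d ∈ Finset.Icc 1 B, |(μ d:ℝ)*(S d - X^3/(6*(d:ℝ)^2))| :=
          Finset.abs_sum_le_sum_abs _ _
      _ ≤ ∑ d ∈ Finset.Icc 1 B, 7*X := by
          refine Finset.sum_le_sum (fun d hd => ?_)
          rw [abs_mul]
          have h3 := inner_est X hX d hd
          have h4 := abs_mu_real_le d
          have h5 : (0:ℝ) ≤ |S d - X^3/(6*(d:ℝ)^2)| := abs_nonneg _
          nlinarith [h3, h4, h5, abs_nonneg ((μ d:ℝ))]
      _ = (B:ℝ) * (7*X) := by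
          rw [Finset.sum_const, Nat.card_Icc]
          simp [nsmul_eq_mul]
      _ ≤ X * (7*X) := by nlinarith [hBX, hX]
      _ = 7*X^2 := by ring
  calc |∑ d ∈ Finset.Icc 1 B, (μ d:ℝ)*(S d - X^3/(6*(d:ℝ)^2))
        + (X^3/6) * ((∑ d ∈ Finset.Icc 1 B, (μ d:ℝ)/(d:ℝ)^2) - 6/π^2)|
      ≤ |∑ d ∈ Finset.Icc 1 B, (μ d:ℝ)*(S d - X^3/(6*(d:ℝ)^2))|
        + |(X^3/6) * ((∑ d ∈ Finset.Icc 1 B, (μ d:ℝ)/(d:ℝ)^2) - 6/π^2)| := abs_add_le _ _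
    _ ≤ 7*X^2 + X^3/6 * merr B := by
        refine add_le_add hbnd1 ?_
        rw [abs_mul, abs_of_pos (show (0:ℝ) < X^3/6 by positivity)]
        exact le_of_eq rfl

end Stmt8Aux

open Stmt8Aux in
/-- If `f : ℕ → ℝ` enumerates `ℚ₁` in strictly increasing order (so
`f (n-1)` is the `n`-th element `r_n` of `ℚ₁`, for `n ≥ 1`), then
`r_n / (π^{2/3} n^{1/3}) → 1` as `n → ∞`. -/
theorem stmt_8 (f : ℕ → ℝ) (hmono : StrictMono f) (hrange : Set.range f = Q1) :
    Tendsto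
      (fun n : ℕ =>
        f n / (π ^ ((2 : ℝ) / 3) * ((n : ℝ) + 1) ^ ((1 : ℝ) / 3)))
      atTop (nhds 1) := by
  have hpi : (0:ℝ) < π := Real.pi_pos
  have hQpos : ∀ n, 1 < f n := fun n => one_lt_of_mem_Q1 (by
    rw [← hrange]; exact Set.mem_range_self n)
  have hft := f_tendsto f hmono hrange
  have hcount : ∀ n : ℕ, ((n:ℝ) + 1) = (cQ (f n) : ℝ) := fun n => by
    rw [cQ_f f hmono hrange n]; push_cast; ring
  -- Step A : (n+1)π²/(f n)³ → 1
  have hb : ∀ n : ℕ, |((n:ℝ)+1)*π^2/(f n)^3 - 1|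
      ≤ 7*π^2/(f n) + π^2/6 * merr ⌊f n⌋₊ := by
    intro n
    have hX1 : 1 ≤ f n := (hQpos n).le
    have hX0 : (0:ℝ) < f n := by linarith
    have hme := main_est (f n) hX1
    have heq : ((n:ℝ)+1)*π^2/(f n)^3 - 1
        = π^2/(f n)^3 * ((cQ (f n):ℝ) - (f n)^3/π^2) := by
      rw [← hcount n]
      field_simp
    rw [heq, abs_mul, abs_of_pos (show (0:ℝ) < π^2/(f n)^3 by positivity)]
    have hmerr0 : 0 ≤ merr ⌊f n⌋₊ := abs_nonneg _
    calc π^2/(f n)^3 * |(cQ (f n):ℝ) - (f n)^3/π^2|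
        ≤ π^2/(f n)^3 * (7*(f n)^2 + (f n)^3/6 * merr ⌊f n⌋₊) := by
          exact mul_le_mul_of_nonneg_left hme (by positivity)
      _ = 7*π^2/(f n) + π^2/6 * merr ⌊f n⌋₊ := by
          field_simp
  have hlim0 : Tendsto (fun n : ℕ => 7*π^2/(f n) + π^2/6 * merr ⌊f n⌋₊) atTop (nhds 0) := by
    have t1 : Tendsto (fun n : ℕ => (f n)⁻¹) atTop (nhds 0) := hft.inv_tendsto_atTop
    have t2 : Tendsto (fun n : ℕ => merr ⌊f n⌋₊) atTop (nhds 0) :=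
      merr_tendsto.comp (tendsto_nat_floor_atTop.comp hft)
    have := (t1.const_mul (7*π^2)).add (t2.const_mul (π^2/6))
    simpa [div_eq_mul_inv, mul_comm] using this
  have hA0 : Tendsto (fun n : ℕ => ((n:ℝ)+1)*π^2/(f n)^3 - 1) atTop (nhds 0) :=
    squeeze_zero_norm hb hlim0
  have hA : Tendsto (fun n : ℕ => ((n:ℝ)+1)*π^2/(f n)^3) atTop (nhds 1) := by
    have := hA0.add_const 1
    simpa using this
  -- Step B : invert
  have hB : Tendsto (fun n : ℕ => (f n)^3/(((n:ℝ)+1)*π^2)) atTop (nhds 1) := by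
    have := hA.inv₀ one_ne_zero
    simp only [inv_div, inv_one] at this
    exact this
  -- Step C : cube root
  have hC : Tendsto (fun n : ℕ => ((f n)^3/(((n:ℝ)+1)*π^2)) ^ ((1:ℝ)/3)) atTop (nhds 1) := by
    have := hB.rpow_const (p := (1:ℝ)/3) (Or.inr (by norm_num))
    simpa [Real.one_rpow] using this
  -- Step D : identify
  refine hC.congr (fun n => ?_)
  have hX0 : (0:ℝ) < f n := lt_trans one_pos (hQpos n)
  have hn1 : (0:ℝ) < (n:ℝ)+1 := by positivity
  rw [Real.div_rpow (by positivity) (by positivity)]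
  have hnum : ((f n)^3) ^ ((1:ℝ)/3) = f n := by
    rw [← Real.rpow_natCast (f n) 3, ← Real.rpow_mul hX0.le]
    norm_num
  have hden : (((n:ℝ)+1)*π^2) ^ ((1:ℝ)/3) = π ^ ((2:ℝ)/3) * ((n:ℝ)+1) ^ ((1:ℝ)/3) := by
    rw [Real.mul_rpow (by positivity) (by positivity)]
    have : (π^2 : ℝ) ^ ((1:ℝ)/3) = π ^ ((2:ℝ)/3) := by
      rw [← Real.rpow_natCast π 2, ← Real.rpow_mul hpi.le]
      norm_num
    rw [this, mul_comm]
  rw [hnum, hden]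
end
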